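/- arXiv:2111.04804 — 14 statements merged into one kernel-verified Lean document; each statement's English description precedes it below -/
import Mathlib

section
/- Let ([m], d) be a finite metric space, w_1, …, w_n : [m] → ℝ≥0 nonnegative weight functions, p ∈ [1, ∞), and let (V_ℓ)_{ℓ∈Λ} be a collection of pairwise disjoint nonempty proper subsets of [m] indexed by a finite set Λ. Then for every nonempty set of centers C ⊆ [m] and every group i ∈ [n], cost_p(C, w_i)^p ≥ Σ_{ℓ∈Λ : V_ℓ ∩ C = ∅} vol_i(V_ℓ). -/
/-- For a finite metric space on `Fin m`, nonnegative weight functions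
`w_1, …, w_n`, `p ∈ [1, ∞)`, and a collection of pairwise disjoint nonempty proper subsets
`(V_ℓ)_{ℓ ∈ Λ}`, for every nonempty set of centers `C` and every group `i`,
`cost_p(C, w_i)^p ≥ ∑_{ℓ ∈ Λ : V_ℓ ∩ C = ∅} vol_i(V_ℓ)`. -/
theorem fair_clustering_cluster_bound_p
    (m n : ℕ) [MetricSpace (Fin m)]
    (w : Fin n → Fin m → ℝ) (hw : ∀ i j, 0 ≤ w i j)
    (p : ℝ) (hp : 1 ≤ p)
    {ι : Type*} [DecidableEq ι] (Λ : Finset ι) (V : ι → Finset (Fin m))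
    (hVne : ∀ ℓ ∈ Λ, (V ℓ).Nonempty)
    (hVproper : ∀ ℓ ∈ Λ, V ℓ ≠ Finset.univ)
    (hVdisj : ∀ ℓ ∈ Λ, ∀ ℓ' ∈ Λ, ℓ ≠ ℓ' → Disjoint (V ℓ) (V ℓ'))
    (C : Finset (Fin m)) (hC : C.Nonempty) (i : Fin n) :
    ∑ ℓ ∈ Λ with V ℓ ∩ C = ∅,
        (∑ j ∈ V ℓ, w i j * Metric.infDist j (↑((V ℓ)ᶜ) : Set (Fin m)) ^ p)
      ≤ ((∑ j, w i j * Metric.infDist j (↑C : Set (Fin m)) ^ p) ^ (1/p)) ^ p := by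
  have hp0 : (0:ℝ) < p := lt_of_lt_of_le one_pos hp
  set g : Fin m → ℝ := fun j => w i j * Metric.infDist j (↑C : Set (Fin m)) ^ p with hg
  have hg0 : ∀ j, 0 ≤ g j := fun j =>
    mul_nonneg (hw i j) (Real.rpow_nonneg Metric.infDist_nonneg p)
  have hX : 0 ≤ ∑ j, g j := Finset.sum_nonneg fun j _ => hg0 j
  rw [← Real.rpow_mul hX, one_div_mul_cancel (ne_of_gt hp0), Real.rpow_one]
  set S := Λ.filter (fun ℓ => V ℓ ∩ C = ∅) with hS
  calc ∑ ℓ ∈ S, ∑ j ∈ V ℓ, w i j * Metric.infDist j (↑((V ℓ)ᶜ) : Set (Fin m)) ^ p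
      ≤ ∑ ℓ ∈ S, ∑ j ∈ V ℓ, g j := by
        apply Finset.sum_le_sum; intro ℓ hℓ
        apply Finset.sum_le_sum; intro j hj
        have hmem : V ℓ ∩ C = ∅ := (Finset.mem_filter.mp hℓ).2
        have hsub : (↑C : Set (Fin m)) ⊆ ↑((V ℓ)ᶜ) := by
          intro x hx
          simp only [Finset.coe_compl, Set.mem_compl_iff, Finset.mem_coe] at hx ⊢
          intro hxV
          exact (Finset.eq_empty_iff_forall_notMem.mp hmem x)
            (Finset.mem_inter.mpr ⟨hxV, hx⟩)
        have hd : Metric.infDist j (↑((V ℓ)ᶜ) : Set (Fin m))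
            ≤ Metric.infDist j (↑C : Set (Fin m)) :=
          Metric.infDist_le_infDist_of_subset hsub (Finset.coe_nonempty.mpr hC)
        exact mul_le_mul_of_nonneg_left
          (Real.rpow_le_rpow Metric.infDist_nonneg hd hp0.le) (hw i j)
    _ = ∑ j ∈ S.biUnion V, g j := by
        refine (Finset.sum_biUnion ?_).symm
        intro a ha b hb hab
        exact hVdisj a (Finset.mem_filter.mp ha).1 b (Finset.mem_filter.mp hb).1 hab
    _ ≤ ∑ j, g j :=
        Finset.sum_le_sum_of_subset_of_nonneg (Finset.subset_univ _) (fun j _ _ => hg0 j)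
end

section
/- Let ([m], d) be a finite metric space, w_1, …, w_n : [m] → ℝ≥0 nonnegative weight functions, 1 ≤ p ≤ q < ∞, and let (V_ℓ)_{ℓ∈Λ} be a collection of pairwise disjoint nonempty proper subsets of [m] indexed by a finite set Λ. Then for every nonempty set of centers C ⊆ [m] and every group i ∈ [n], cost_p(C, w_i)^q ≥ Σ_{ℓ∈Λ : V_ℓ ∩ C = ∅} vol_i(V_ℓ)^{q/p}. -/
/-- For a finite metric space on `Fin m`, nonnegative weight functions,
`1 ≤ p ≤ q < ∞`, and pairwise disjoint nonempty proper subsets `(V_ℓ)_{ℓ ∈ Λ}`,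
for every nonempty set of centers `C` and every group `i`,
`cost_p(C, w_i)^q ≥ ∑_{ℓ ∈ Λ : V_ℓ ∩ C = ∅} vol_i(V_ℓ)^{q/p}`. -/
theorem fair_clustering_cluster_bound_q
    (m n : ℕ) [MetricSpace (Fin m)]
    (w : Fin n → Fin m → ℝ) (hw : ∀ i j, 0 ≤ w i j)
    (p q : ℝ) (hp : 1 ≤ p) (hpq : p ≤ q)
    {ι : Type*} [DecidableEq ι] (Λ : Finset ι) (V : ι → Finset (Fin m))
    (hVne : ∀ ℓ ∈ Λ, (V ℓ).Nonempty)
    (hVproper : ∀ ℓ ∈ Λ, V ℓ ≠ Finset.univ)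
    (hVdisj : ∀ ℓ ∈ Λ, ∀ ℓ' ∈ Λ, ℓ ≠ ℓ' → Disjoint (V ℓ) (V ℓ'))
    (C : Finset (Fin m)) (hC : C.Nonempty) (i : Fin n) :
    ∑ ℓ ∈ Λ with V ℓ ∩ C = ∅,
        (∑ j ∈ V ℓ, w i j * Metric.infDist j (↑((V ℓ)ᶜ) : Set (Fin m)) ^ p) ^ (q/p)
      ≤ ((∑ j, w i j * Metric.infDist j (↑C : Set (Fin m)) ^ p) ^ (1/p)) ^ q := by
  have hp0 : (0:ℝ) < p := lt_of_lt_of_le one_pos hp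
  set S : ℝ := ∑ j, w i j * Metric.infDist j (↑C : Set (Fin m)) ^ p with hSdef
  set a : ι → ℝ := fun ℓ =>
    ∑ j ∈ V ℓ, w i j * Metric.infDist j (↑((V ℓ)ᶜ) : Set (Fin m)) ^ p with hadef
  set b : ι → ℝ := fun ℓ =>
    ∑ j ∈ V ℓ, w i j * Metric.infDist j (↑C : Set (Fin m)) ^ p with hbdef
  set Λ' : Finset ι := Λ.filter (fun ℓ => V ℓ ∩ C = ∅) with hΛ'
  have hterm : ∀ j : Fin m, 0 ≤ w i j * Metric.infDist j (↑C : Set (Fin m)) ^ p :=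
    fun j => mul_nonneg (hw i j) (Real.rpow_nonneg Metric.infDist_nonneg p)
  have hS0 : 0 ≤ S := Finset.sum_nonneg fun j _ => hterm j
  have hb0 : ∀ ℓ, 0 ≤ b ℓ := fun ℓ => Finset.sum_nonneg fun j _ => hterm j
  have ha0 : ∀ ℓ, 0 ≤ a ℓ := fun ℓ => Finset.sum_nonneg fun j _ =>
    mul_nonneg (hw i j) (Real.rpow_nonneg Metric.infDist_nonneg p)
  -- a ℓ ≤ b ℓ for ℓ ∈ Λ'
  have hab : ∀ ℓ ∈ Λ', a ℓ ≤ b ℓ := by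
    intro ℓ hℓ
    rw [hΛ', Finset.mem_filter] at hℓ
    apply Finset.sum_le_sum
    intro j hj
    apply mul_le_mul_of_nonneg_left _ (hw i j)
    apply Real.rpow_le_rpow Metric.infDist_nonneg _ hp0.le
    apply Metric.infDist_le_infDist_of_subset _ (by exact_mod_cast hC)
    intro x hx
    simp only [Finset.coe_compl, Set.mem_compl_iff, Finset.mem_coe] at *
    intro hxV
    have : x ∈ V ℓ ∩ C := Finset.mem_inter.2 ⟨hxV, hx⟩
    rw [hℓ.2] at this
    exact absurd this (Finset.notMem_empty x)
  -- sum of b over Λ' ≤ S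
  have hbS : ∑ ℓ ∈ Λ', b ℓ ≤ S := by
    have hdisj : (Λ' : Set ι).PairwiseDisjoint V := by
      intro x hx y hy hxy
      exact hVdisj x (Finset.mem_of_mem_filter x hx) y (Finset.mem_of_mem_filter y hy) hxy
    calc ∑ ℓ ∈ Λ', b ℓ
        = ∑ j ∈ Λ'.biUnion V, w i j * Metric.infDist j (↑C : Set (Fin m)) ^ p :=
          (Finset.sum_biUnion hdisj).symm
      _ ≤ S := Finset.sum_le_sum_of_subset_of_nonneg (Finset.subset_univ _)
          (fun j _ _ => hterm j)
  have haS : ∀ ℓ ∈ Λ', a ℓ ≤ S := by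
    intro ℓ hℓ
    refine (hab ℓ hℓ).trans ?_
    refine le_trans ?_ hbS
    exact Finset.single_le_sum (fun ℓ' _ => hb0 ℓ') hℓ
  have hr1 : (1:ℝ) ≤ q / p := (one_le_div hp0).2 hpq
  have hr0 : (0:ℝ) < q / p := lt_of_lt_of_le one_pos hr1
  -- main chain
  have key : ∑ ℓ ∈ Λ', a ℓ ^ (q/p) ≤ S ^ (q/p) := by
    calc ∑ ℓ ∈ Λ', a ℓ ^ (q/p)
        ≤ ∑ ℓ ∈ Λ', a ℓ * S ^ (q/p - 1) := by
          apply Finset.sum_le_sum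
          intro ℓ hℓ
          have h1 : a ℓ ^ (q/p) = a ℓ ^ (1:ℝ) * a ℓ ^ (q/p - 1) := by
            rw [← Real.rpow_add' (ha0 ℓ) (by linarith)]
            ring_nf
          rw [h1, Real.rpow_one]
          exact mul_le_mul_of_nonneg_left
            (Real.rpow_le_rpow (ha0 ℓ) (haS ℓ hℓ) (by linarith)) (ha0 ℓ)
      _ = (∑ ℓ ∈ Λ', a ℓ) * S ^ (q/p - 1) := by rw [Finset.sum_mul]
      _ ≤ S * S ^ (q/p - 1) := by
          apply mul_le_mul_of_nonneg_right _ (Real.rpow_nonneg hS0 _)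
          exact le_trans (Finset.sum_le_sum hab) hbS
      _ = S ^ (q/p) := by
          nth_rewrite 1 [← Real.rpow_one S]
          rw [← Real.rpow_add' hS0 (by linarith)]
          ring_nf
  have hfin : (S ^ (1/p)) ^ q = S ^ (q/p) := by
    rw [← Real.rpow_mul hS0]
    congr 1
    field_simp
  rw [hfin]
  exact key
end

section
/- Let (K, d) be a finite metric space, let w'_1, …, w'_n : K → ℝ≥0 be nonnegative weight functions, and let 1 ≤ q ≤ p < ∞. Define ŵ(ℓ) = Σ_{i=1}^n w'_i(ℓ)^{q/p}. Then for every nonempty subset K̂ ⊆ K, (Σ_{i=1}^n (Σ_{ℓ∈K} w'_i(ℓ)·d(ℓ, K̂)^p)^{q/p})^{1/q} ≤ (Σ_{ℓ∈K} ŵ(ℓ)·d(ℓ, K̂)^q)^{1/q}. -/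
lemma aux_sum_rpow_le {ι : Type*} (s : Finset ι) (f : ι → ℝ) (hf : ∀ i ∈ s, 0 ≤ f i)
    {t : ℝ} (ht0 : 0 < t) (ht1 : t ≤ 1) :
    (∑ i ∈ s, f i) ^ t ≤ ∑ i ∈ s, f i ^ t := by
  induction s using Finset.cons_induction with
  | empty => simp [Real.zero_rpow ht0.ne']
  | cons a s ha ih =>
    rw [Finset.sum_cons, Finset.sum_cons]
    have hfa : 0 ≤ f a := hf a (Finset.mem_cons_self _ _)
    have hsum : 0 ≤ ∑ i ∈ s, f i :=
      Finset.sum_nonneg fun i hi => hf i (Finset.mem_cons_of_mem hi)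
    have h2 : (f a + ∑ i ∈ s, f i) ^ t ≤ f a ^ t + (∑ i ∈ s, f i) ^ t := by
      have := NNReal.rpow_add_le_add_rpow ⟨f a, hfa⟩ ⟨_, hsum⟩ ht0.le ht1
      have h3 := NNReal.coe_le_coe.2 this
      push_cast at h3
      exact h3
    exact h2.trans (by
      gcongr
      exact ih fun i hi => hf i (Finset.mem_cons_of_mem hi))

/-- For a finite metric space `K`, nonnegative weights `w'_1, …, w'_n`,
`1 ≤ q ≤ p < ∞`, and `ŵ(ℓ) = ∑_i w'_i(ℓ)^{q/p}`, for every nonempty `K̂ ⊆ K`,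
the `(ℓ_p, ℓ_q)`-cost of `K̂` is at most the `ℓ_q`-cost of `K̂` w.r.t. the weights `ŵ`. -/
theorem fair_clustering_reweighting_upper
    (K : Type*) [Fintype K] [MetricSpace K]
    (n : ℕ) (w' : Fin n → K → ℝ) (hw : ∀ i ℓ, 0 ≤ w' i ℓ)
    (p q : ℝ) (hq : 1 ≤ q) (hqp : q ≤ p)
    (Khat : Finset K) (hKhat : Khat.Nonempty) :
    (∑ i, (∑ ℓ, w' i ℓ * Metric.infDist ℓ (↑Khat : Set K) ^ p) ^ (q/p)) ^ (1/q)
      ≤ (∑ ℓ, (∑ i, w' i ℓ ^ (q/p)) * Metric.infDist ℓ (↑Khat : Set K) ^ q) ^ (1/q) := by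
  have hq0 : 0 < q := lt_of_lt_of_le zero_lt_one hq
  have hp0 : 0 < p := lt_of_lt_of_le hq0 hqp
  have hs0 : 0 < q / p := div_pos hq0 hp0
  have hs1 : q / p ≤ 1 := (div_le_one hp0).2 hqp
  have hd : ∀ ℓ : K, 0 ≤ Metric.infDist ℓ (↑Khat : Set K) := fun ℓ => Metric.infDist_nonneg
  have key : ∀ i : Fin n,
      (∑ ℓ, w' i ℓ * Metric.infDist ℓ (↑Khat : Set K) ^ p) ^ (q/p)
        ≤ ∑ ℓ, w' i ℓ ^ (q/p) * Metric.infDist ℓ (↑Khat : Set K) ^ q := by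
    intro i
    have h1 := aux_sum_rpow_le Finset.univ
      (fun ℓ => w' i ℓ * Metric.infDist ℓ (↑Khat : Set K) ^ p)
      (fun ℓ _ => mul_nonneg (hw i ℓ) (Real.rpow_nonneg (hd ℓ) p)) hs0 hs1
    refine h1.trans ?_
    apply le_of_eq
    apply Finset.sum_congr rfl
    intro ℓ _
    have hpq : p * (q / p) = q := by field_simp
    rw [Real.mul_rpow (hw i ℓ) (Real.rpow_nonneg (hd ℓ) p),
      ← Real.rpow_mul (hd ℓ), hpq]
  have key2 : (∑ i, (∑ ℓ, w' i ℓ * Metric.infDist ℓ (↑Khat : Set K) ^ p) ^ (q/p))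
      ≤ ∑ ℓ, (∑ i, w' i ℓ ^ (q/p)) * Metric.infDist ℓ (↑Khat : Set K) ^ q := by
    calc ∑ i, (∑ ℓ, w' i ℓ * Metric.infDist ℓ (↑Khat : Set K) ^ p) ^ (q/p)
        ≤ ∑ i, ∑ ℓ, w' i ℓ ^ (q/p) * Metric.infDist ℓ (↑Khat : Set K) ^ q :=
          Finset.sum_le_sum fun i _ => key i
      _ = ∑ ℓ, (∑ i, w' i ℓ ^ (q/p)) * Metric.infDist ℓ (↑Khat : Set K) ^ q := by
          rw [Finset.sum_comm]
          exact Finset.sum_congr rfl fun ℓ _ => (Finset.sum_mul _ _ _).symm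
  exact Real.rpow_le_rpow
    (Finset.sum_nonneg fun i _ => Real.rpow_nonneg
      (Finset.sum_nonneg fun ℓ _ => mul_nonneg (hw i ℓ) (Real.rpow_nonneg (hd ℓ) p)) _)
    key2 (by positivity)
end

section
/- Let (K, d) be a finite metric space, let w'_1, …, w'_n : K → ℝ≥0 be nonnegative weight functions, and let 1 ≤ q ≤ p < ∞. Define ŵ(ℓ) = Σ_{i=1}^n w'_i(ℓ)^{q/p}. Then for every nonempty subset K̂ ⊆ K, (Σ_{ℓ∈K} ŵ(ℓ)·d(ℓ, K̂)^q)^{1/q} ≤ |K ∖ K̂|^{(p−q)/(pq)} · (Σ_{i=1}^n (Σ_{ℓ∈K} w'_i(ℓ)·d(ℓ, K̂)^p)^{q/p})^{1/q}. -/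
open Finset

/-- Key Hölder-type lemma: for nonnegative `b` and `0 < q ≤ p`,
`∑ b^(q/p) ≤ |s|^((p-q)/p) * (∑ b)^(q/p)`. -/
lemma sum_rpow_div_le {ι : Type*} (s : Finset ι) (b : ι → ℝ) (hb : ∀ i ∈ s, 0 ≤ b i)
    {p q : ℝ} (hq : 0 < q) (hqp : q ≤ p) :
    ∑ i ∈ s, b i ^ (q/p) ≤ (#s : ℝ) ^ ((p - q)/p) * (∑ i ∈ s, b i) ^ (q/p) := by
  have hp : 0 < p := lt_of_lt_of_le hq hqp
  have hp0 : p ≠ 0 := hp.ne'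
  have hq0 : q ≠ 0 := hq.ne'
  have hr : 1 ≤ p / q := (one_le_div hq).2 hqp
  have hexp : q / p * (p / q) = 1 := by field_simp
  have hexp' : p / q * (q / p) = 1 := by field_simp
  have hf : ∀ i ∈ s, 0 ≤ b i ^ (q/p) := fun i hi => Real.rpow_nonneg (hb i hi) _
  have key := Real.rpow_sum_le_const_mul_sum_rpow_of_nonneg s (f := fun i => b i ^ (q/p)) hr hf
  have hsimp : ∀ i ∈ s, (b i ^ (q/p)) ^ (p/q) = b i := by
    intro i hi
    rw [← Real.rpow_mul (hb i hi), hexp, Real.rpow_one]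
  rw [Finset.sum_congr rfl hsimp] at key
  have hS : 0 ≤ ∑ i ∈ s, b i ^ (q/p) := Finset.sum_nonneg hf
  have h2 := Real.rpow_le_rpow (Real.rpow_nonneg hS _) key (le_of_lt (div_pos hq hp))
  rw [← Real.rpow_mul hS, hexp', Real.rpow_one,
    Real.mul_rpow (Real.rpow_nonneg (Nat.cast_nonneg _) _) (Finset.sum_nonneg hb),
    ← Real.rpow_mul (Nat.cast_nonneg _)] at h2
  have hee : (p / q - 1) * (q / p) = (p - q) / p := by field_simp
  rwa [hee] at h2

/-- For a finite metric space `K`, nonnegative weights, `1 ≤ q ≤ p < ∞`,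
and `ŵ(ℓ) = ∑_i w'_i(ℓ)^{q/p}`, for every nonempty `K̂ ⊆ K`, the `ℓ_q`-cost of `K̂`
w.r.t. `ŵ` is at most `|K ∖ K̂|^{(p−q)/(pq)}` times the `(ℓ_p, ℓ_q)`-cost of `K̂`. -/
theorem fair_clustering_reweighting_lower
    (K : Type*) [Fintype K] [DecidableEq K] [MetricSpace K]
    (n : ℕ) (w' : Fin n → K → ℝ) (hw : ∀ i ℓ, 0 ≤ w' i ℓ)
    (p q : ℝ) (hq : 1 ≤ q) (hqp : q ≤ p)
    (Khat : Finset K) (hKhat : Khat.Nonempty) :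
    (∑ ℓ, (∑ i, w' i ℓ ^ (q/p)) * Metric.infDist ℓ (↑Khat : Set K) ^ q) ^ (1/q)
      ≤ ((Khatᶜ).card : ℝ) ^ ((p - q)/(p*q)) *
        (∑ i, (∑ ℓ, w' i ℓ * Metric.infDist ℓ (↑Khat : Set K) ^ p) ^ (q/p)) ^ (1/q) := by
  set D : K → ℝ := fun ℓ => Metric.infDist ℓ (↑Khat : Set K) with hD
  have hq0 : (0:ℝ) < q := lt_of_lt_of_le one_pos hq
  have hp0 : (0:ℝ) < p := lt_of_lt_of_le hq0 hqp
  have hDnn : ∀ ℓ, 0 ≤ D ℓ := fun ℓ => Metric.infDist_nonneg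
  have hbnn : ∀ (i : Fin n) ℓ, 0 ≤ w' i ℓ * D ℓ ^ p :=
    fun i ℓ => mul_nonneg (hw i ℓ) (Real.rpow_nonneg (hDnn ℓ) _)
  set C : ℝ := ((Khatᶜ).card : ℝ) ^ ((p - q)/p) with hC
  have hCnn : 0 ≤ C := Real.rpow_nonneg (Nat.cast_nonneg _) _
  set S : ℝ := ∑ i, (∑ ℓ, w' i ℓ * D ℓ ^ p) ^ (q/p) with hS
  have hSnn : 0 ≤ S :=
    Finset.sum_nonneg fun i _ => Real.rpow_nonneg (Finset.sum_nonneg fun ℓ _ => hbnn i ℓ) _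
  -- main finite-sum inequality
  have main : (∑ ℓ, (∑ i, w' i ℓ ^ (q/p)) * D ℓ ^ q) ≤ C * S := by
    have swap : (∑ ℓ, (∑ i, w' i ℓ ^ (q/p)) * D ℓ ^ q)
        = ∑ i, ∑ ℓ, w' i ℓ ^ (q/p) * D ℓ ^ q := by
      rw [Finset.sum_comm]
      exact Finset.sum_congr rfl fun ℓ _ => Finset.sum_mul _ _ _
    rw [swap, hS, Finset.mul_sum]
    apply Finset.sum_le_sum
    intro i _
    have hterm : ∀ ℓ, w' i ℓ ^ (q/p) * D ℓ ^ q = (w' i ℓ * D ℓ ^ p) ^ (q/p) := by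
      intro ℓ
      rw [Real.mul_rpow (hw i ℓ) (Real.rpow_nonneg (hDnn ℓ) _), ← Real.rpow_mul (hDnn ℓ)]
      congr 2
      field_simp
    calc (∑ ℓ, w' i ℓ ^ (q/p) * D ℓ ^ q)
        = ∑ ℓ ∈ Khatᶜ, (w' i ℓ * D ℓ ^ p) ^ (q/p) := by
          rw [Finset.sum_congr rfl fun ℓ _ => hterm ℓ]
          refine (Finset.sum_subset (Finset.subset_univ _) ?_).symm
          intro ℓ _ hℓ
          have hmem : ℓ ∈ Khat := by simpa using hℓ
          have : D ℓ = 0 := Metric.infDist_zero_of_mem (Finset.mem_coe.2 hmem)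
          rw [this, Real.zero_rpow hp0.ne', mul_zero,
            Real.zero_rpow (by positivity : q/p ≠ 0)]
      _ ≤ C * (∑ ℓ ∈ Khatᶜ, w' i ℓ * D ℓ ^ p) ^ (q/p) :=
          sum_rpow_div_le _ _ (fun ℓ _ => hbnn i ℓ) hq0 hqp
      _ ≤ C * (∑ ℓ, w' i ℓ * D ℓ ^ p) ^ (q/p) := by
          apply mul_le_mul_of_nonneg_left _ hCnn
          apply Real.rpow_le_rpow (Finset.sum_nonneg fun ℓ _ => hbnn i ℓ)
            (Finset.sum_le_sum_of_subset_of_nonneg (Finset.subset_univ _)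
              fun ℓ _ _ => hbnn i ℓ) (by positivity)
  have hAnn : 0 ≤ ∑ ℓ, (∑ i, w' i ℓ ^ (q/p)) * D ℓ ^ q :=
    Finset.sum_nonneg fun ℓ _ => mul_nonneg
      (Finset.sum_nonneg fun i _ => Real.rpow_nonneg (hw i ℓ) _)
      (Real.rpow_nonneg (hDnn ℓ) _)
  have hfinal := Real.rpow_le_rpow hAnn main (by positivity : (0:ℝ) ≤ 1/q)
  rw [Real.mul_rpow hCnn hSnn, hC, ← Real.rpow_mul (Nat.cast_nonneg _)] at hfinal
  have : (p - q) / p * (1 / q) = (p - q) / (p * q) := by field_simp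
  rwa [this] at hfinal
end

section
/- Let K be a finite set, let σ : K → K be a map with σ(ℓ) ≠ ℓ for every ℓ ∈ K such that the undirected graph on vertex set K with edge set {{ℓ, σ(ℓ)} : ℓ ∈ K} is acyclic (a forest), and let (x_ℓ)_{ℓ∈K} be nonnegative reals. Then there exists a partition of K into two sets K₁, K₂ such that σ(K₁) ⊆ K₂, σ(K₂) ⊆ K₁, and Σ_{ℓ∈K₁} x_ℓ ≥ (Σ_{ℓ∈K} x_ℓ)/2. -/
open Function

private def iterWalk {K : Type*} (G : SimpleGraph K) (σ : K → K)
    (hadj : ∀ ℓ, G.Adj ℓ (σ ℓ)) (a : K) : (k : ℕ) → G.Walk a (σ^[k] a)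
  | 0 => SimpleGraph.Walk.nil
  | k+1 => (iterWalk G σ hadj a k).concat
      (by rw [Function.iterate_succ_apply']; exact hadj (σ^[k] a))

private lemma iterWalk_edges {K : Type*} (G : SimpleGraph K) (σ : K → K)
    (hadj : ∀ ℓ, G.Adj ℓ (σ ℓ)) (a : K) (k : ℕ) :
    ∀ e ∈ (iterWalk G σ hadj a k).edges, ∃ i, i < k ∧ e = s(σ^[i] a, σ^[i+1] a) := by
  induction k with
  | zero => simp [iterWalk]
  | succ k ih =>
    intro e he
    rw [iterWalk, SimpleGraph.Walk.edges_concat, List.concat_eq_append,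
      List.mem_append] at he
    rcases he with he | he
    · obtain ⟨i, hi, rfl⟩ := ih e he
      exact ⟨i, by omega, rfl⟩
    · simp only [List.mem_singleton] at he
      refine ⟨k, by omega, ?_⟩
      rw [he, Function.iterate_succ_apply']

private lemma exists_two_periodic {K : Type*} [Finite K] (σ : K → K) (hσ : ∀ ℓ, σ ℓ ≠ ℓ)
    (hforest : (SimpleGraph.fromRel (fun a b => σ a = b)).IsAcyclic) (ℓ : K) :
    ∃ n, σ^[n + 2] ℓ = σ^[n] ℓ := by
  classical
  set G := SimpleGraph.fromRel (fun a b => σ a = b) with hG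
  have hadj : ∀ z : K, G.Adj z (σ z) := fun z =>
    (SimpleGraph.fromRel_adj _ _ _).mpr ⟨(hσ z).symm, Or.inl rfl⟩
  -- eventual periodicity
  obtain ⟨i, j, hlt, hij⟩ : ∃ i j : ℕ, i < j ∧ σ^[i] ℓ = σ^[j] ℓ := by
    obtain ⟨i, j, hne, hij⟩ := Finite.exists_ne_map_eq_of_infinite (fun n : ℕ => σ^[n] ℓ)
    rcases hne.lt_or_gt with h | h
    · exact ⟨i, j, h, hij⟩
    · exact ⟨j, i, h, hij.symm⟩
  set a := σ^[i] ℓ with ha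
  have hper : ∃ m, 0 < m ∧ σ^[m] a = a := by
    refine ⟨j - i, by omega, ?_⟩
    rw [ha, ← Function.iterate_add_apply]
    rw [show j - i + i = j by omega]
    exact hij.symm
  set m := Nat.find hper with hm
  obtain ⟨hm0, hma⟩ := Nat.find_spec hper
  rw [← hm] at hm0 hma
  -- distinctness on the cycle
  have distinct : ∀ p q : ℕ, p < q → q < m → σ^[p] a ≠ σ^[q] a := by
    intro p q hpq hqm heq
    have h1 : σ^[q - p] (σ^[p] a) = σ^[p] a := by
      rw [← Function.iterate_add_apply, show q - p + p = q by omega]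
      exact heq.symm
    have h2 : σ^[m - p] (σ^[p] a) = a := by
      rw [← Function.iterate_add_apply, show m - p + p = m by omega]
      exact hma
    have h3 : σ^[q - p] a = a := by
      calc σ^[q - p] a = σ^[q - p] (σ^[m - p] (σ^[p] a)) := by rw [h2]
      _ = σ^[m - p] (σ^[q - p] (σ^[p] a)) := by
          simp only [← Function.iterate_add_apply]
          congr 1
          omega
      _ = σ^[m - p] (σ^[p] a) := by rw [h1]
      _ = a := h2
    exact Nat.find_min hper (show q - p < m by omega) ⟨by omega, h3⟩
  have hm1 : m ≠ 1 := by
    intro h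
    rw [h] at hma
    exact hσ a hma
  -- if m ≥ 3, contradiction with acyclicity
  have hm2 : m = 2 := by
    by_contra hne2
    have hm3 : 3 ≤ m := by omega
    have hadj' : G.Adj (σ^[m-1] a) a := by
      refine (SimpleGraph.fromRel_adj _ _ _).mpr ⟨?_, Or.inl ?_⟩
      · exact fun h => distinct 0 (m-1) (by omega) (by omega) (by simpa using h.symm)
      · rw [← Function.iterate_succ_apply' σ (m-1) a, show (m - 1).succ = m by omega]
        exact hma
    have hbridge := (SimpleGraph.isAcyclic_iff_forall_adj_isBridge.mp hforest) hadj'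
    rw [SimpleGraph.isBridge_iff] at hbridge
    refine hbridge (SimpleGraph.reachable_delete_edges_iff_exists_walk.mpr ?_)
    refine ⟨(iterWalk G σ hadj a (m-1)).reverse, ?_⟩
    rw [SimpleGraph.Walk.edges_reverse, List.mem_reverse]
    intro hmem
    obtain ⟨k, hk, hek⟩ := iterWalk_edges G σ hadj a (m-1) _ hmem
    rw [Sym2.eq_iff] at hek
    rcases hek with ⟨h1, h2⟩ | ⟨h1, h2⟩
    · -- σ^[m-1] a = σ^[k] a and a = σ^[k+1] a
      exact distinct k (m-1) (by omega) (by omega) h1.symm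
    · -- σ^[m-1] a = σ^[k+1] a and a = σ^[k] a
      rcases Nat.eq_zero_or_pos k with rfl | hk0
      · exact distinct 1 (m-1) (by omega) (by omega) (by simpa using h1.symm)
      · exact distinct 0 k (by omega) (by omega) (by simpa using h2)
  -- conclude
  refine ⟨i, ?_⟩
  rw [show i + 2 = 2 + i from by omega, Function.iterate_add_apply]
  rw [← ha, ← hm2]
  exact hma

private lemma exists_flip_coloring {K : Type*} [Fintype K] (σ : K → K)
    (hσ : ∀ ℓ, σ ℓ ≠ ℓ)
    (hforest : (SimpleGraph.fromRel (fun a b => σ a = b)).IsAcyclic) :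
    ∃ c : K → Bool, ∀ ℓ, c (σ ℓ) = !(c ℓ) := by
  classical
  have h2 : ∀ ℓ : K, ∃ n, σ^[n + 2] ℓ = σ^[n] ℓ :=
    fun ℓ => exists_two_periodic σ hσ hforest ℓ
  let e := Fintype.equivFin K
  refine ⟨fun ℓ => xor (decide (Nat.find (h2 ℓ) % 2 = 1))
      (decide (e (σ^[Nat.find (h2 ℓ)] ℓ) < e (σ (σ^[Nat.find (h2 ℓ)] ℓ)))), ?_⟩
  intro ℓ
  simp only []
  rcases Nat.eq_zero_or_pos (Nat.find (h2 ℓ)) with h0 | hpos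
  · have hfix : σ^[2] ℓ = ℓ := by
      have hs := Nat.find_spec (h2 ℓ)
      rw [h0] at hs
      simpa using hs
    have hfix' : σ (σ ℓ) = ℓ := by
      have : σ^[2] ℓ = σ (σ ℓ) := by
        rw [Function.iterate_succ_apply' σ 1 ℓ, Function.iterate_succ_apply' σ 0 ℓ]
        simp
      rw [← this]; exact hfix
    have h0' : Nat.find (h2 (σ ℓ)) = 0 := by
      refine Nat.le_zero.mp (Nat.find_le ?_)
      show σ^[0 + 2] (σ ℓ) = σ^[0] (σ ℓ)
      simp only [Nat.zero_add, Function.iterate_zero, id]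
      rw [← Function.iterate_succ_apply σ 2 ℓ]
      rw [Function.iterate_succ_apply' σ 2 ℓ, hfix]
    rw [h0, h0']
    simp only [Function.iterate_zero, id, hfix']
    have hne : e (σ ℓ) ≠ e ℓ := fun h => hσ ℓ (e.injective h)
    rcases hne.lt_or_gt with h | h
    · simp [h, asymm h]
    · simp [h, asymm h]
  · set N := Nat.find (h2 ℓ) with hN
    set n := N - 1 with hn'
    have hn : N = n + 1 := by omega
    have hub : Nat.find (h2 (σ ℓ)) ≤ n := by
      refine Nat.find_le ?_
      show σ^[n + 2] (σ ℓ) = σ^[n] (σ ℓ)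
      rw [← Function.iterate_succ_apply σ (n+2) ℓ, ← Function.iterate_succ_apply σ n ℓ]
      rw [show (n+2).succ = N + 2 by omega, show n.succ = N by omega]
      exact Nat.find_spec (h2 ℓ)
    have hlb : n ≤ Nat.find (h2 (σ ℓ)) := by
      by_contra hlt
      push_neg at hlt
      have hs := Nat.find_spec (h2 (σ ℓ))
      have hss : σ^[(Nat.find (h2 (σ ℓ)) + 1) + 2] ℓ = σ^[Nat.find (h2 (σ ℓ)) + 1] ℓ := by
        rw [show (Nat.find (h2 (σ ℓ)) + 1) + 2 = (Nat.find (h2 (σ ℓ)) + 2) + 1 by omega]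
        rw [Function.iterate_succ_apply σ (Nat.find (h2 (σ ℓ)) + 2) ℓ,
          Function.iterate_succ_apply σ (Nat.find (h2 (σ ℓ))) ℓ]
        exact hs
      have := Nat.find_min' (h2 ℓ) hss
      omega
    have hfind' : Nat.find (h2 (σ ℓ)) = n := le_antisymm hub hlb
    have hend : σ^[Nat.find (h2 (σ ℓ))] (σ ℓ) = σ^[N] ℓ := by
      rw [hfind', ← Function.iterate_succ_apply σ n ℓ, show n.succ = N by omega]
    rw [hend, hfind', hn]
    rcases Nat.even_or_odd n with h | h
    · have h1 : n % 2 = 0 := Nat.even_iff.mp h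
      have h2' : (n+1) % 2 = 1 := by omega
      simp [h1, h2']
    · have h1 : n % 2 = 1 := Nat.odd_iff.mp h
      have h2' : (n+1) % 2 = 0 := by omega
      simp [h1, h2']


/-- If `K` is a finite set, `σ : K → K` is fixed-point-free and the undirected
graph with edges `{ℓ, σ(ℓ)}` is a forest, and `x : K → ℝ≥0`, then `K` can be partitioned into
`K₁, K₂` with `σ(K₁) ⊆ K₂`, `σ(K₂) ⊆ K₁`, and `∑_{ℓ ∈ K₁} x_ℓ ≥ (∑_{ℓ ∈ K} x_ℓ)/2`. -/
theorem forest_bipartition_half_weight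
    (K : Type*) [Fintype K] [DecidableEq K]
    (σ : K → K) (hσ : ∀ ℓ, σ ℓ ≠ ℓ)
    (hforest : (SimpleGraph.fromRel (fun a b => σ a = b)).IsAcyclic)
    (x : K → ℝ) (hx : ∀ ℓ, 0 ≤ x ℓ) :
    ∃ K₁ K₂ : Finset K, K₁ ∪ K₂ = Finset.univ ∧ Disjoint K₁ K₂ ∧
      (∀ ℓ ∈ K₁, σ ℓ ∈ K₂) ∧ (∀ ℓ ∈ K₂, σ ℓ ∈ K₁) ∧
      (∑ ℓ : K, x ℓ) / 2 ≤ ∑ ℓ ∈ K₁, x ℓ := by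
  classical
  obtain ⟨c, hflip⟩ := exists_flip_coloring σ hσ hforest
  set T := Finset.univ.filter (fun ℓ => c ℓ = true) with hT
  set F := Finset.univ.filter (fun ℓ => ¬ c ℓ = true) with hF
  have hunion : T ∪ F = Finset.univ := by
    ext ℓ
    by_cases h : c ℓ = true <;> simp [hT, hF, h]
  have hdisj : Disjoint T F := by
    rw [Finset.disjoint_left]
    intro ℓ h1 h2
    rw [hT, Finset.mem_filter] at h1
    rw [hF, Finset.mem_filter] at h2
    exact h2.2 h1.2
  have hTF : ∀ ℓ ∈ T, σ ℓ ∈ F := by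
    intro ℓ h1
    rw [hT, Finset.mem_filter] at h1
    rw [hF, Finset.mem_filter]
    refine ⟨Finset.mem_univ _, ?_⟩
    rw [hflip ℓ, h1.2]
    simp
  have hFT : ∀ ℓ ∈ F, σ ℓ ∈ T := by
    intro ℓ h1
    rw [hF, Finset.mem_filter] at h1
    rw [hT, Finset.mem_filter]
    refine ⟨Finset.mem_univ _, ?_⟩
    have hc : c ℓ = false := by
      have := h1.2
      rwa [Bool.not_eq_true] at this
    rw [hflip ℓ, hc]
    simp
  have hsum : ∑ ℓ ∈ T, x ℓ + ∑ ℓ ∈ F, x ℓ = ∑ ℓ : K, x ℓ :=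
    Finset.sum_filter_add_sum_filter_not Finset.univ (fun ℓ => c ℓ = true) x
  by_cases hbig : (∑ ℓ : K, x ℓ) / 2 ≤ ∑ ℓ ∈ T, x ℓ
  · exact ⟨T, F, hunion, hdisj, hTF, hFT, hbig⟩
  · refine ⟨F, T, by rw [Finset.union_comm]; exact hunion, hdisj.symm, hFT, hTF, by linarith⟩
end

section
/- Let (X, d) be a metric space, K ⊆ X a finite set with |K| ≥ 2, {V_ℓ}_{ℓ∈K} a Voronoi partition of X induced by K, and for each ℓ ∈ K let σ(ℓ) be a closest point of K ∖ {ℓ} to ℓ. Let Λ ⊆ K satisfy σ(ℓ) ∉ Λ for every ℓ ∈ Λ. Then for every ℓ ∈ K and every j ∈ V_ℓ: d(j, K ∖ Λ) ≤ 3·d(j, K) + 2·1[ℓ ∈ Λ]·d(j, X ∖ V_ℓ), where 1[ℓ ∈ Λ] is 1 if ℓ ∈ Λ and 0 otherwise (and V_ℓ ⊊ X whenever ℓ ∈ Λ). -/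
/-- In a metric space `X` with a finite set `K`, `|K| ≥ 2`, a Voronoi partition
`{V_ℓ}` induced by `K`, nearest-neighbor map `σ`, and `Λ ⊆ K` with `σ(ℓ) ∉ Λ` for all
`ℓ ∈ Λ` (and `V_ℓ ⊊ X` for `ℓ ∈ Λ`), every `ℓ ∈ K` and `j ∈ V_ℓ` satisfy
`d(j, K ∖ Λ) ≤ 3 d(j, K) + 2·1[ℓ ∈ Λ]·d(j, X ∖ V_ℓ)`. -/
theorem voronoi_closed_centers_distance_bound
    (X : Type*) [MetricSpace X] [DecidableEq X]
    (K : Finset X) (hK : 2 ≤ K.card)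
    (V : X → Set X) (σ : X → X)
    (hcover : (⋃ c ∈ K, V c) = Set.univ)
    (hdisj : ∀ c ∈ K, ∀ c' ∈ K, c ≠ c' → Disjoint (V c) (V c'))
    (hmem : ∀ c ∈ K, c ∈ V c)
    (hvor : ∀ c ∈ K, ∀ j ∈ V c, dist j c = Metric.infDist j (↑K : Set X))
    (hσ : ∀ c ∈ K, σ c ∈ K ∧ σ c ≠ c ∧
        dist c (σ c) = Metric.infDist c ((↑K : Set X) \ {c}))
    (Λ : Finset X) (hΛK : Λ ⊆ K)
    (hσΛ : ∀ c ∈ Λ, σ c ∉ Λ)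
    (hproper : ∀ c ∈ Λ, V c ≠ Set.univ) :
    ∀ ℓ ∈ K, ∀ j ∈ V ℓ,
      Metric.infDist j (↑(K \ Λ) : Set X)
        ≤ 3 * Metric.infDist j (↑K : Set X)
          + 2 * (if ℓ ∈ Λ then (1:ℝ) else 0) * Metric.infDist j (V ℓ)ᶜ := by
  intro ℓ hℓK j hj
  have hjK : dist j ℓ = Metric.infDist j (↑K : Set X) := hvor ℓ hℓK j hj
  by_cases hℓΛ : ℓ ∈ Λ
  · simp only [hℓΛ, if_true, mul_one]
    obtain ⟨hσK, hσne, hσd⟩ := hσ ℓ hℓK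
    have hσmem : σ ℓ ∈ (↑(K \ Λ) : Set X) := by
      simp [Finset.mem_sdiff, hσK, hσΛ ℓ hℓΛ]
    have h1 : Metric.infDist j (↑(K \ Λ) : Set X) ≤ dist j (σ ℓ) :=
      Metric.infDist_le_dist_of_mem hσmem
    have h2 : dist j (σ ℓ) ≤ dist j ℓ + dist ℓ (σ ℓ) := dist_triangle j ℓ (σ ℓ)
    -- bound dist ℓ (σ ℓ) by 2 * dist ℓ p for any p ∉ V ℓ
    have key : ∀ p ∈ (V ℓ)ᶜ, dist ℓ (σ ℓ) ≤ 2 * dist ℓ p := by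
      intro p hp
      have hpc : p ∈ ⋃ c ∈ K, V c := by rw [hcover]; trivial
      obtain ⟨c, hcK, hpV⟩ := by simpa using hpc
      have hcne : c ≠ ℓ := by
        rintro rfl; exact hp hpV
      have hpd : dist p c = Metric.infDist p (↑K : Set X) := hvor c hcK p hpV
      have h3 : dist p c ≤ dist p ℓ := by
        rw [hpd]; exact Metric.infDist_le_dist_of_mem (by exact_mod_cast hℓK)
      have h4 : dist ℓ (σ ℓ) ≤ dist ℓ c := by
        rw [hσd]
        exact Metric.infDist_le_dist_of_mem ⟨by exact_mod_cast hcK, hcne⟩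
      calc dist ℓ (σ ℓ) ≤ dist ℓ c := h4
        _ ≤ dist ℓ p + dist p c := dist_triangle ℓ p c
        _ ≤ dist ℓ p + dist p ℓ := by linarith
        _ = 2 * dist ℓ p := by rw [dist_comm p ℓ]; ring
    have hne : ((V ℓ)ᶜ : Set X).Nonempty := by
      obtain ⟨p, hp⟩ := Set.ne_univ_iff_exists_notMem _ |>.mp (hproper ℓ hℓΛ)
      exact ⟨p, hp⟩
    have hfin : (Metric.infDist j (↑(K \ Λ) : Set X) - 3 * dist j ℓ) / 2
        ≤ Metric.infDist j (V ℓ)ᶜ := by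
      by_contra hlt
      push_neg at hlt
      obtain ⟨p, hp, hplt⟩ := (Metric.infDist_lt_iff hne).mp hlt
      have hk := key p hp
      have htri : dist ℓ p ≤ dist ℓ j + dist j p := dist_triangle ℓ j p
      rw [dist_comm ℓ j] at htri
      linarith
    rw [← hjK]
    linarith
  · simp only [hℓΛ, if_false, mul_zero, zero_mul, add_zero]
    have hmem' : ℓ ∈ (↑(K \ Λ) : Set X) := by simp [hℓK, hℓΛ]
    have h1 : Metric.infDist j (↑(K \ Λ) : Set X) ≤ dist j ℓ :=
      Metric.infDist_le_dist_of_mem hmem'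
    have h0 : 0 ≤ Metric.infDist j (↑K : Set X) := Metric.infDist_nonneg
    rw [← hjK] at h0 ⊢
    linarith
end

section
/- Let ([m], d) be a finite metric space, w_1, …, w_n : [m] → ℝ≥0 nonnegative weight functions, and p, q ∈ [1, ∞). Let K ⊆ [m] with |K| ≥ 2, let {V_ℓ}_{ℓ∈K} be a Voronoi partition of [m] induced by K, let σ(ℓ) be a closest point of K ∖ {ℓ} to ℓ, and let Λ ⊆ K satisfy σ(ℓ) ∉ Λ for every ℓ ∈ Λ and V_ℓ ⊊ [m] for every ℓ ∈ Λ. Then cost_{p,q}(K ∖ Λ) ≤ 3·cost_{p,q}(K) + 2·(Σ_{i=1}^n (Σ_{ℓ∈Λ} vol_i(V_ℓ))^{q/p})^{1/q}. -/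
open Finset

lemma lp_wscale {ι : Type*} (s : Finset ι) (w u : ι → ℝ) (hw : ∀ i, 0 ≤ w i)
    (hu : ∀ i, 0 ≤ u i) (c p : ℝ) (hc : 0 ≤ c) (hp : 0 < p) :
    (∑ i ∈ s, w i * (c * u i) ^ p) ^ (1/p) = c * (∑ i ∈ s, w i * u i ^ p) ^ (1/p) := by
  have h1 : ∀ i, w i * (c * u i) ^ p = c ^ p * (w i * u i ^ p) := by
    intro i; rw [Real.mul_rpow hc (hu i)]; ring
  simp_rw [h1, ← Finset.mul_sum]
  rw [Real.mul_rpow (Real.rpow_nonneg hc p)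
      (Finset.sum_nonneg fun i _ => mul_nonneg (hw i) (Real.rpow_nonneg (hu i) p)),
    ← Real.rpow_mul hc, mul_one_div_cancel hp.ne', Real.rpow_one]

lemma weighted_minkowski {ι : Type*} (s : Finset ι) (w u v : ι → ℝ)
    (hw : ∀ i, 0 ≤ w i) (hu : ∀ i, 0 ≤ u i) (hv : ∀ i, 0 ≤ v i)
    (p : ℝ) (hp : 1 ≤ p) :
    (∑ i ∈ s, w i * (u i + v i) ^ p) ^ (1/p) ≤
      (∑ i ∈ s, w i * u i ^ p) ^ (1/p) + (∑ i ∈ s, w i * v i ^ p) ^ (1/p) := by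
  have hp0 : (0:ℝ) < p := lt_of_lt_of_le one_pos hp
  have key : ∀ (x : ℝ) i, 0 ≤ x → w i * x ^ p = (w i ^ (1/p) * x) ^ p := by
    intro x i hx
    rw [Real.mul_rpow (Real.rpow_nonneg (hw i) _) hx, ← Real.rpow_mul (hw i),
      one_div_mul_cancel hp0.ne', Real.rpow_one]
  have e1 : ∀ i, w i * (u i + v i) ^ p = (w i ^ (1/p) * u i + w i ^ (1/p) * v i) ^ p := by
    intro i
    rw [← mul_add]
    exact key _ i (add_nonneg (hu i) (hv i))
  have e2 : ∀ i, w i * u i ^ p = (w i ^ (1/p) * u i) ^ p := fun i => key _ i (hu i)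
  have e3 : ∀ i, w i * v i ^ p = (w i ^ (1/p) * v i) ^ p := fun i => key _ i (hv i)
  simp_rw [e1, e2, e3]
  exact Real.Lp_add_le_of_nonneg (s := s) hp
    (fun i _ => mul_nonneg (Real.rpow_nonneg (hw i) _) (hu i))
    (fun i _ => mul_nonneg (Real.rpow_nonneg (hw i) _) (hv i))

lemma weighted_minkowski' {ι : Type*} (s : Finset ι) (w u v : ι → ℝ)
    (hw : ∀ i, 0 ≤ w i) (hu : ∀ i, 0 ≤ u i) (hv : ∀ i, 0 ≤ v i)
    (c₁ c₂ p : ℝ) (hc₁ : 0 ≤ c₁) (hc₂ : 0 ≤ c₂) (hp : 1 ≤ p) :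
    (∑ i ∈ s, w i * (c₁ * u i + c₂ * v i) ^ p) ^ (1/p) ≤
      c₁ * (∑ i ∈ s, w i * u i ^ p) ^ (1/p) + c₂ * (∑ i ∈ s, w i * v i ^ p) ^ (1/p) := by
  have hp0 : (0:ℝ) < p := lt_of_lt_of_le one_pos hp
  have h := weighted_minkowski s w (fun i => c₁ * u i) (fun i => c₂ * v i) hw
    (fun i => mul_nonneg hc₁ (hu i)) (fun i => mul_nonneg hc₂ (hv i)) p hp
  rw [lp_wscale s w u hw hu c₁ p hc₁ hp0, lp_wscale s w v hw hv c₂ p hc₂ hp0] at h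
  exact h

/-- For a finite metric space on `Fin m`, weights `w_i`, `p, q ∈ [1, ∞)`,
a set `K` with `|K| ≥ 2`, a Voronoi partition `{V_ℓ}` induced by `K`, nearest-neighbor map
`σ`, and `Λ ⊆ K` with `σ(ℓ) ∉ Λ` and `V_ℓ ⊊ [m]` for every `ℓ ∈ Λ`:
`cost_{p,q}(K ∖ Λ) ≤ 3·cost_{p,q}(K) + 2·(∑_i (∑_{ℓ∈Λ} vol_i(V_ℓ))^{q/p})^{1/q}`. -/
theorem fair_clustering_closed_centers_cost_bound
    (m n : ℕ) [MetricSpace (Fin m)]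
    (w : Fin n → Fin m → ℝ) (hw : ∀ i j, 0 ≤ w i j)
    (p q : ℝ) (hp : 1 ≤ p) (hq : 1 ≤ q)
    (K : Finset (Fin m)) (hK : 2 ≤ K.card)
    (V : Fin m → Finset (Fin m)) (σ : Fin m → Fin m)
    (hcover : ∀ j : Fin m, ∃ c ∈ K, j ∈ V c)
    (hdisj : ∀ c ∈ K, ∀ c' ∈ K, c ≠ c' → Disjoint (V c) (V c'))
    (hmem : ∀ c ∈ K, c ∈ V c)
    (hvor : ∀ c ∈ K, ∀ j ∈ V c, dist j c = Metric.infDist j (↑K : Set (Fin m)))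
    (hσ : ∀ c ∈ K, σ c ∈ K ∧ σ c ≠ c ∧
        dist c (σ c) = Metric.infDist c ((↑K : Set (Fin m)) \ {c}))
    (Λ : Finset (Fin m)) (hΛK : Λ ⊆ K)
    (hσΛ : ∀ c ∈ Λ, σ c ∉ Λ)
    (hproper : ∀ c ∈ Λ, V c ≠ Finset.univ) :
    (∑ i, (∑ j, w i j * Metric.infDist j (↑(K \ Λ) : Set (Fin m)) ^ p) ^ (q/p)) ^ (1/q)
      ≤ 3 * (∑ i, (∑ j, w i j * Metric.infDist j (↑K : Set (Fin m)) ^ p) ^ (q/p)) ^ (1/q)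
        + 2 * (∑ i, (∑ ℓ ∈ Λ, ∑ j ∈ V ℓ,
            w i j * Metric.infDist j (↑((V ℓ)ᶜ) : Set (Fin m)) ^ p) ^ (q/p)) ^ (1/q) := by
  classical
  have hp0 : (0:ℝ) < p := lt_of_lt_of_le one_pos hp
  have hq0 : (0:ℝ) < q := lt_of_lt_of_le one_pos hq
  choose ℓ hℓK hℓV using hcover
  set a : Fin m → ℝ := fun j => Metric.infDist j (↑K : Set (Fin m)) with ha
  set b : Fin m → ℝ := fun j =>
    if ℓ j ∈ Λ then Metric.infDist j (↑((V (ℓ j))ᶜ) : Set (Fin m)) else 0 with hb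
  have ha0 : ∀ j, 0 ≤ a j := fun j => Metric.infDist_nonneg
  have hb0 : ∀ j, 0 ≤ b j := by
    intro j; by_cases h : ℓ j ∈ Λ <;> simp [hb, h, Metric.infDist_nonneg]
  have hℓeq : ∀ c ∈ K, ∀ j ∈ V c, ℓ j = c := by
    intro c hc j hj
    by_contra hne
    exact Finset.disjoint_left.mp (hdisj _ (hℓK j) _ hc hne) (hℓV j) hj
  -- pointwise bound
  have hpt : ∀ j, Metric.infDist j (↑(K \ Λ) : Set (Fin m)) ≤ 3 * a j + 2 * b j := by
    intro j
    by_cases hΛj : ℓ j ∈ Λ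
    · have hbj : b j = Metric.infDist j (↑((V (ℓ j))ᶜ) : Set (Fin m)) := by
        simp [hb, hΛj]
      have hcK : ℓ j ∈ K := hℓK j
      obtain ⟨hσK, hσne, hσd⟩ := hσ (ℓ j) hcK
      have hσmem : σ (ℓ j) ∈ (↑(K \ Λ) : Set (Fin m)) := by
        simp only [Finset.coe_sdiff, Set.mem_diff, Finset.mem_coe]
        exact ⟨hσK, hσΛ _ hΛj⟩
      have h1 : Metric.infDist j (↑(K \ Λ) : Set (Fin m)) ≤ dist j (σ (ℓ j)) :=
        Metric.infDist_le_dist_of_mem hσmem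
      -- a nearest point u outside the cell
      have hcne : ((V (ℓ j))ᶜ : Finset (Fin m)).Nonempty := by
        rw [Finset.nonempty_iff_ne_empty]
        intro h
        exact hproper _ hΛj (by simpa using congrArg compl h)
      obtain ⟨u, huc, humin⟩ := Finset.exists_min_image ((V (ℓ j))ᶜ) (fun y => dist j y) hcne
      have hne' : ((↑((V (ℓ j))ᶜ) : Set (Fin m))).Nonempty := ⟨u, huc⟩
      have hud : dist j u ≤ b j := by
        rw [hbj]
        by_contra h
        push_neg at h
        obtain ⟨y, hy, hlt⟩ := (Metric.infDist_lt_iff hne').mp h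
        exact absurd hlt (not_lt.mpr (humin y hy))
      have huV : u ∉ V (ℓ j) := Finset.mem_compl.mp huc
      have hℓune : ℓ u ≠ ℓ j := fun h => huV (h ▸ hℓV u)
      have h2 : dist (ℓ j) (σ (ℓ j)) ≤ dist (ℓ j) (ℓ u) := by
        rw [hσd]
        exact Metric.infDist_le_dist_of_mem ⟨hℓK u, hℓune⟩
      have h3 : dist u (ℓ u) ≤ dist u (ℓ j) := by
        rw [hvor (ℓ u) (hℓK u) u (hℓV u)]
        exact Metric.infDist_le_dist_of_mem (Finset.mem_coe.mpr hcK)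
      have haj : a j = dist j (ℓ j) := (hvor (ℓ j) hcK j (hℓV j)).symm
      have t1 : dist j (σ (ℓ j)) ≤ dist j (ℓ j) + dist (ℓ j) (σ (ℓ j)) := dist_triangle _ _ _
      have t2 : dist (ℓ j) (ℓ u) ≤ dist (ℓ j) u + dist u (ℓ u) := dist_triangle _ _ _
      have t3 : dist (ℓ j) u ≤ dist (ℓ j) j + dist j u := dist_triangle _ _ _
      have t4 : dist u (ℓ j) ≤ dist u j + dist j (ℓ j) := dist_triangle _ _ _
      have e1 : dist (ℓ j) j = dist j (ℓ j) := dist_comm _ _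
      have e2 : dist u j = dist j u := dist_comm _ _
      rw [haj]
      linarith
    · have hbj : b j = 0 := by simp [hb, hΛj]
      have hmem' : ℓ j ∈ (↑(K \ Λ) : Set (Fin m)) := by
        simp only [Finset.coe_sdiff, Set.mem_diff, Finset.mem_coe]
        exact ⟨hℓK j, hΛj⟩
      have h1 : Metric.infDist j (↑(K \ Λ) : Set (Fin m)) ≤ dist j (ℓ j) :=
        Metric.infDist_le_dist_of_mem hmem'
      have haj : a j = dist j (ℓ j) := (hvor (ℓ j) (hℓK j) j (hℓV j)).symm
      rw [hbj, haj]
      linarith [dist_nonneg (x := j) (y := ℓ j)]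
  -- sum identity for the b-term
  have hBsum : ∀ i, (∑ ℓ' ∈ Λ, ∑ j ∈ V ℓ',
      w i j * Metric.infDist j (↑((V ℓ')ᶜ) : Set (Fin m)) ^ p)
      = ∑ j, w i j * b j ^ p := by
    intro i
    have hdisjΛ : ∀ x ∈ Λ, ∀ y ∈ Λ, x ≠ y → Disjoint (V x) (V y) := by
      intro x hx y hy hxy; exact hdisj x (hΛK hx) y (hΛK hy) hxy
    have step1 : ∀ ℓ' ∈ Λ, (∑ j ∈ V ℓ',
        w i j * Metric.infDist j (↑((V ℓ')ᶜ) : Set (Fin m)) ^ p)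
        = ∑ j ∈ V ℓ', w i j * b j ^ p := by
      intro ℓ' hℓ'
      apply Finset.sum_congr rfl
      intro j hj
      have hℓj : ℓ j = ℓ' := hℓeq ℓ' (hΛK hℓ') j hj
      have : b j = Metric.infDist j (↑((V ℓ')ᶜ) : Set (Fin m)) := by
        rw [hb]; simp only [hℓj, hℓ', if_pos]
      rw [this]
    rw [Finset.sum_congr rfl step1, ← Finset.sum_biUnion hdisjΛ]
    apply Finset.sum_subset (Finset.subset_univ (Λ.biUnion V))
    intro j _ hj
    have hℓjΛ : ℓ j ∉ Λ := fun h => hj (Finset.mem_biUnion.mpr ⟨ℓ j, h, hℓV j⟩)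
    have : b j = 0 := by simp [hb, hℓjΛ]
    rw [this, Real.zero_rpow hp0.ne', mul_zero]
  -- abbreviations
  set S : Fin n → ℝ := fun i =>
    ∑ j, w i j * Metric.infDist j (↑(K \ Λ) : Set (Fin m)) ^ p with hS
  set A : Fin n → ℝ := fun i => (∑ j, w i j * a j ^ p) ^ (1/p) with hA
  set B : Fin n → ℝ := fun i => (∑ j, w i j * b j ^ p) ^ (1/p) with hBdef
  have hS0 : ∀ i, 0 ≤ S i := fun i => Finset.sum_nonneg fun j _ =>
    mul_nonneg (hw i j) (Real.rpow_nonneg Metric.infDist_nonneg p)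
  have hA0 : ∀ i, 0 ≤ A i := fun i => Real.rpow_nonneg
    (Finset.sum_nonneg fun j _ => mul_nonneg (hw i j) (Real.rpow_nonneg (ha0 j) p)) _
  have hB0 : ∀ i, 0 ≤ B i := fun i => Real.rpow_nonneg
    (Finset.sum_nonneg fun j _ => mul_nonneg (hw i j) (Real.rpow_nonneg (hb0 j) p)) _
  have step_i : ∀ i, (S i) ^ (1/p) ≤ 3 * A i + 2 * B i := by
    intro i
    have h1 : S i ≤ ∑ j, w i j * (3 * a j + 2 * b j) ^ p :=
      Finset.sum_le_sum fun j _ => mul_le_mul_of_nonneg_left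
        (Real.rpow_le_rpow Metric.infDist_nonneg (hpt j) hp0.le) (hw i j)
    have h2 := weighted_minkowski' Finset.univ (w i) a b (hw i) ha0 hb0
      3 2 p (by norm_num) (by norm_num) hp
    exact le_trans (Real.rpow_le_rpow (hS0 i) h1 (by positivity)) h2
  -- main chain
  have lhs_eq : (∑ i, S i ^ (q/p)) = ∑ i, ((S i) ^ (1/p)) ^ q := by
    apply Finset.sum_congr rfl
    intro i _
    rw [← Real.rpow_mul (hS0 i)]
    congr 1
    field_simp
  have hmid : (∑ i, S i ^ (q/p)) ^ (1/q) ≤ (∑ i, (3 * A i + 2 * B i) ^ q) ^ (1/q) := by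
    rw [lhs_eq]
    apply Real.rpow_le_rpow
      (Finset.sum_nonneg fun i _ => Real.rpow_nonneg (Real.rpow_nonneg (hS0 i) _) q)
      (Finset.sum_le_sum fun i _ => Real.rpow_le_rpow
        (Real.rpow_nonneg (hS0 i) _) (step_i i) hq0.le)
      (by positivity)
  have houter := weighted_minkowski' Finset.univ (fun _ => (1:ℝ)) A B
    (fun _ => zero_le_one) hA0 hB0 3 2 q (by norm_num) (by norm_num) hq
  simp only [one_mul] at houter
  have eA : (∑ i, A i ^ q) = ∑ i, (∑ j, w i j * a j ^ p) ^ (q/p) := by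
    apply Finset.sum_congr rfl
    intro i _
    rw [hA, ← Real.rpow_mul
      (Finset.sum_nonneg fun j _ => mul_nonneg (hw i j) (Real.rpow_nonneg (ha0 j) p))]
    congr 1
    field_simp
  have eB : (∑ i, B i ^ q) = ∑ i, (∑ ℓ' ∈ Λ, ∑ j ∈ V ℓ',
      w i j * Metric.infDist j (↑((V ℓ')ᶜ) : Set (Fin m)) ^ p) ^ (q/p) := by
    apply Finset.sum_congr rfl
    intro i _
    rw [hBdef, ← Real.rpow_mul
      (Finset.sum_nonneg fun j _ => mul_nonneg (hw i j) (Real.rpow_nonneg (hb0 j) p)),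
      hBsum i]
    congr 1
    field_simp
  calc (∑ i, S i ^ (q/p)) ^ (1/q)
      ≤ (∑ i, (3 * A i + 2 * B i) ^ q) ^ (1/q) := hmid
    _ ≤ 3 * (∑ i, A i ^ q) ^ (1/q) + 2 * (∑ i, B i ^ q) ^ (1/q) := houter
    _ = _ := by rw [eA, eB]
end

section
/- Let (X, d) be a metric space, let K ⊆ X be a finite nonempty set, and let L ⊆ X be a finite nonempty set. For each j ∈ L choose a point π(j) ∈ K with d(j, π(j)) = d(j, K), and set L' = π(L) ⊆ K. Then for every ℓ ∈ K, d(ℓ, L') ≤ 2·d(ℓ, L). -/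
/-- In a metric space `X` with finite nonempty sets `K, L ⊆ X`, if `π` maps
each point of `L` to a nearest point of `K` and `L' = π(L)`, then
`d(ℓ, L') ≤ 2·d(ℓ, L)` for every `ℓ ∈ K`. -/
theorem nearest_point_projection_doubles_distance
    (X : Type*) [MetricSpace X] [DecidableEq X]
    (K L : Finset X) (hK : K.Nonempty) (hL : L.Nonempty)
    (π : X → X)
    (hπ : ∀ j ∈ L, π j ∈ K ∧ dist j (π j) = Metric.infDist j (↑K : Set X)) :
    ∀ ℓ ∈ K, Metric.infDist ℓ (↑(L.image π) : Set X) ≤ 2 * Metric.infDist ℓ (↑L : Set X) := by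
  intro ℓ hℓ
  obtain ⟨j, hj, hjd⟩ := (L.finite_toSet.isCompact).exists_infDist_eq_dist
    (by exact_mod_cast hL) ℓ
  obtain ⟨hπjK, hπjd⟩ := hπ j hj
  have h1 : Metric.infDist ℓ (↑(L.image π) : Set X) ≤ dist ℓ (π j) :=
    Metric.infDist_le_dist_of_mem (by simp; exact ⟨j, hj, rfl⟩)
  have h2 : dist j (π j) ≤ dist j ℓ := by
    rw [hπjd]; exact Metric.infDist_le_dist_of_mem hℓ
  calc Metric.infDist ℓ (↑(L.image π) : Set X) ≤ dist ℓ (π j) := h1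
    _ ≤ dist ℓ j + dist j (π j) := dist_triangle _ _ _
    _ ≤ dist ℓ j + dist j ℓ := by linarith
    _ = 2 * dist ℓ j := by rw [dist_comm j ℓ]; ring
    _ = 2 * Metric.infDist ℓ (↑L : Set X) := by rw [hjd]
end

section
/- Let ([m], d) be a finite metric space, w_1, …, w_n : [m] → ℝ≥0 nonnegative weight functions, p, q ∈ [1, ∞), K ⊆ [m] nonempty, and a : [m] → K an assignment map. Define w'_i(ℓ) = Σ_{j : a(j)=ℓ} w_i(j) and the assignment error E = (Σ_{i=1}^n (Σ_{j=1}^m w_i(j)·d(j, a(j))^p)^{q/p})^{1/q}. Then for every nonempty L ⊆ [m], both (Σ_{i=1}^n (Σ_{ℓ∈K} w'_i(ℓ)·d(ℓ, L)^p)^{q/p})^{1/q} ≤ cost_{p,q}(L) + E and cost_{p,q}(L) ≤ (Σ_{i=1}^n (Σ_{ℓ∈K} w'_i(ℓ)·d(ℓ, L)^p)^{q/p})^{1/q} + E hold. -/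
open Finset Metric

private lemma wterm {p : ℝ} (hp : 1 ≤ p) {wi x : ℝ} (hwi : 0 ≤ wi) (hx : 0 ≤ x) :
    wi * x ^ p = (wi ^ (1/p) * x) ^ p := by
  have hp0 : p ≠ 0 := by linarith
  rw [Real.mul_rpow (Real.rpow_nonneg hwi _) hx, ← Real.rpow_mul hwi,
    one_div_mul_cancel hp0, Real.rpow_one]

private lemma wmink {ι : Type*} (s : Finset ι) (p : ℝ) (hp : 1 ≤ p)
    (w f g : ι → ℝ) (hw : ∀ i ∈ s, 0 ≤ w i) (hf : ∀ i ∈ s, 0 ≤ f i)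
    (hg : ∀ i ∈ s, 0 ≤ g i) :
    (∑ i ∈ s, w i * (f i + g i) ^ p) ^ (1/p) ≤
      (∑ i ∈ s, w i * f i ^ p) ^ (1/p) + (∑ i ∈ s, w i * g i ^ p) ^ (1/p) := by
  have h1 : ∑ i ∈ s, w i * (f i + g i) ^ p
      = ∑ i ∈ s, (w i ^ (1/p) * f i + w i ^ (1/p) * g i) ^ p := by
    refine Finset.sum_congr rfl fun i hi => ?_
    rw [← mul_add]
    exact wterm hp (hw i hi) (add_nonneg (hf i hi) (hg i hi))
  have h2 : ∑ i ∈ s, w i * f i ^ p = ∑ i ∈ s, (w i ^ (1/p) * f i) ^ p :=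
    Finset.sum_congr rfl fun i hi => wterm hp (hw i hi) (hf i hi)
  have h3 : ∑ i ∈ s, w i * g i ^ p = ∑ i ∈ s, (w i ^ (1/p) * g i) ^ p :=
    Finset.sum_congr rfl fun i hi => wterm hp (hw i hi) (hg i hi)
  rw [h1, h2, h3]
  exact Real.Lp_add_le_of_nonneg s hp
    (fun i hi => mul_nonneg (Real.rpow_nonneg (hw i hi) _) (hf i hi))
    (fun i hi => mul_nonneg (Real.rpow_nonneg (hw i hi) _) (hg i hi))

private lemma mixmink {n m : ℕ} (w : Fin n → Fin m → ℝ) (hw : ∀ i j, 0 ≤ w i j)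
    (p q : ℝ) (hp : 1 ≤ p) (hq : 1 ≤ q) (f g : Fin m → ℝ)
    (hf : ∀ j, 0 ≤ f j) (hg : ∀ j, 0 ≤ g j) :
    (∑ i, (∑ j, w i j * (f j + g j) ^ p) ^ (q/p)) ^ (1/q) ≤
      (∑ i, (∑ j, w i j * f j ^ p) ^ (q/p)) ^ (1/q)
      + (∑ i, (∑ j, w i j * g j ^ p) ^ (q/p)) ^ (1/q) := by
  have hp0 : p ≠ 0 := by linarith
  have hq0 : 0 ≤ q := by linarith
  set A : Fin n → ℝ := fun i => (∑ j, w i j * f j ^ p) ^ (1/p) with hA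
  set B : Fin n → ℝ := fun i => (∑ j, w i j * g j ^ p) ^ (1/p) with hB
  have hAn : ∀ i, 0 ≤ A i := fun i => Real.rpow_nonneg
    (Finset.sum_nonneg fun j _ => mul_nonneg (hw i j) (Real.rpow_nonneg (hf j) _)) _
  have hBn : ∀ i, 0 ≤ B i := fun i => Real.rpow_nonneg
    (Finset.sum_nonneg fun j _ => mul_nonneg (hw i j) (Real.rpow_nonneg (hg j) _)) _
  have hpow : ∀ (x : ℝ), 0 ≤ x → x ^ (q/p) = (x ^ (1/p)) ^ q := by
    intro x hx
    rw [← Real.rpow_mul hx, one_div_mul_eq_div]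
  have step1 : (∑ i, (∑ j, w i j * (f j + g j) ^ p) ^ (q/p)) ^ (1/q)
      ≤ (∑ i, (A i + B i) ^ q) ^ (1/q) := by
    apply Real.rpow_le_rpow
      (Finset.sum_nonneg fun i _ => Real.rpow_nonneg (Finset.sum_nonneg fun j _ =>
        mul_nonneg (hw i j) (Real.rpow_nonneg (add_nonneg (hf j) (hg j)) _)) _)
      ?_ (by positivity)
    refine Finset.sum_le_sum fun i _ => ?_
    rw [hpow _ (Finset.sum_nonneg fun j _ =>
      mul_nonneg (hw i j) (Real.rpow_nonneg (add_nonneg (hf j) (hg j)) _))]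
    refine Real.rpow_le_rpow (Real.rpow_nonneg (Finset.sum_nonneg fun j _ =>
      mul_nonneg (hw i j) (Real.rpow_nonneg (add_nonneg (hf j) (hg j)) _)) _) ?_ hq0
    exact wmink Finset.univ p hp (w i) f g (fun j _ => hw i j) (fun j _ => hf j)
      (fun j _ => hg j)
  have step2 : (∑ i, (A i + B i) ^ q) ^ (1/q)
      ≤ (∑ i, A i ^ q) ^ (1/q) + (∑ i, B i ^ q) ^ (1/q) :=
    Real.Lp_add_le_of_nonneg Finset.univ hq (fun i _ => hAn i) (fun i _ => hBn i)
  have hAq : ∑ i, A i ^ q = ∑ i, (∑ j, w i j * f j ^ p) ^ (q/p) :=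
    Finset.sum_congr rfl fun i _ => by
      rw [hpow _ (Finset.sum_nonneg fun j _ =>
        mul_nonneg (hw i j) (Real.rpow_nonneg (hf j) _))]
  have hBq : ∑ i, B i ^ q = ∑ i, (∑ j, w i j * g j ^ p) ^ (q/p) :=
    Finset.sum_congr rfl fun i _ => by
      rw [hpow _ (Finset.sum_nonneg fun j _ =>
        mul_nonneg (hw i j) (Real.rpow_nonneg (hg j) _))]
  calc (∑ i, (∑ j, w i j * (f j + g j) ^ p) ^ (q/p)) ^ (1/q)
      ≤ (∑ i, (A i + B i) ^ q) ^ (1/q) := step1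
    _ ≤ (∑ i, A i ^ q) ^ (1/q) + (∑ i, B i ^ q) ^ (1/q) := step2
    _ = _ := by rw [hAq, hBq]

private lemma mixmono {n m : ℕ} (w : Fin n → Fin m → ℝ) (hw : ∀ i j, 0 ≤ w i j)
    (p q : ℝ) (hp : 1 ≤ p) (hq : 1 ≤ q) (x y : Fin m → ℝ)
    (hx : ∀ j, 0 ≤ x j) (hxy : ∀ j, x j ≤ y j) :
    (∑ i, (∑ j, w i j * x j ^ p) ^ (q/p)) ^ (1/q) ≤
      (∑ i, (∑ j, w i j * y j ^ p) ^ (q/p)) ^ (1/q) := by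
  apply Real.rpow_le_rpow
    (Finset.sum_nonneg fun i _ => Real.rpow_nonneg (Finset.sum_nonneg fun j _ =>
      mul_nonneg (hw i j) (Real.rpow_nonneg (hx j) _)) _) ?_ (by positivity)
  refine Finset.sum_le_sum fun i _ => ?_
  refine Real.rpow_le_rpow (Finset.sum_nonneg fun j _ =>
    mul_nonneg (hw i j) (Real.rpow_nonneg (hx j) _)) ?_ (by positivity)
  refine Finset.sum_le_sum fun j _ => ?_
  exact mul_le_mul_of_nonneg_left
    (Real.rpow_le_rpow (hx j) (hxy j) (by linarith)) (hw i j)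

/-- For a finite metric space on `Fin m`, weights `w_i`, `p, q ∈ [1, ∞)`,
a nonempty `K ⊆ [m]` and an assignment `a : [m] → K`, aggregating the weights via
`w'_i(ℓ) = ∑_{j : a(j)=ℓ} w_i(j)` changes the `(ℓ_p, ℓ_q)`-cost of any nonempty set of
centers `L` by at most the assignment error
`E = (∑_i (∑_j w_i(j)·d(j, a(j))^p)^{q/p})^{1/q}`, in both directions. -/
theorem fair_clustering_aggregation_cost_comparison
    (m n : ℕ) [MetricSpace (Fin m)]
    (w : Fin n → Fin m → ℝ) (hw : ∀ i j, 0 ≤ w i j)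
    (p q : ℝ) (hp : 1 ≤ p) (hq : 1 ≤ q)
    (K : Finset (Fin m)) (hK : K.Nonempty)
    (a : Fin m → Fin m) (ha : ∀ j, a j ∈ K)
    (L : Finset (Fin m)) (hL : L.Nonempty) :
    (∑ i, (∑ ℓ ∈ K, (∑ j with a j = ℓ, w i j) * Metric.infDist ℓ (↑L : Set (Fin m)) ^ p)
          ^ (q/p)) ^ (1/q)
      ≤ (∑ i, (∑ j, w i j * Metric.infDist j (↑L : Set (Fin m)) ^ p) ^ (q/p)) ^ (1/q)
        + (∑ i, (∑ j, w i j * dist j (a j) ^ p) ^ (q/p)) ^ (1/q) ∧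
    (∑ i, (∑ j, w i j * Metric.infDist j (↑L : Set (Fin m)) ^ p) ^ (q/p)) ^ (1/q)
      ≤ (∑ i, (∑ ℓ ∈ K, (∑ j with a j = ℓ, w i j) * Metric.infDist ℓ (↑L : Set (Fin m)) ^ p)
          ^ (q/p)) ^ (1/q)
        + (∑ i, (∑ j, w i j * dist j (a j) ^ p) ^ (q/p)) ^ (1/q) := by
  set D : Fin m → ℝ := fun x => Metric.infDist x (↑L : Set (Fin m)) with hD
  have hDn : ∀ x, 0 ≤ D x := fun x => Metric.infDist_nonneg
  have hkey : ∀ i, ∑ ℓ ∈ K, (∑ j with a j = ℓ, w i j) * D ℓ ^ p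
      = ∑ j, w i j * D (a j) ^ p := by
    intro i
    have h1 : ∀ ℓ ∈ K, (∑ j with a j = ℓ, w i j) * D ℓ ^ p
        = ∑ j with a j = ℓ, w i j * D (a j) ^ p := by
      intro ℓ _
      rw [Finset.sum_mul]
      refine Finset.sum_congr rfl fun j hj => ?_
      rw [(Finset.mem_filter.mp hj).2]
    rw [Finset.sum_congr rfl h1]
    exact Finset.sum_fiberwise_of_maps_to (fun j _ => ha j) _
  constructor
  · rw [show (∑ i, (∑ ℓ ∈ K, (∑ j with a j = ℓ, w i j) * D ℓ ^ p) ^ (q/p)) ^ (1/q)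
        = (∑ i, (∑ j, w i j * D (a j) ^ p) ^ (q/p)) ^ (1/q) by
        congr 1; exact Finset.sum_congr rfl fun i _ => by rw [hkey i]]
    calc (∑ i, (∑ j, w i j * D (a j) ^ p) ^ (q/p)) ^ (1/q)
        ≤ (∑ i, (∑ j, w i j * (D j + dist j (a j)) ^ p) ^ (q/p)) ^ (1/q) := by
          refine mixmono w hw p q hp hq _ _ (fun j => hDn _) fun j => ?_
          calc D (a j) ≤ D j + dist (a j) j := Metric.infDist_le_infDist_add_dist
            _ = D j + dist j (a j) := by rw [dist_comm]
      _ ≤ _ := mixmink w hw p q hp hq _ _ hDn (fun j => dist_nonneg)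
  · calc (∑ i, (∑ j, w i j * D j ^ p) ^ (q/p)) ^ (1/q)
        ≤ (∑ i, (∑ j, w i j * (D (a j) + dist j (a j)) ^ p) ^ (q/p)) ^ (1/q) := by
          refine mixmono w hw p q hp hq _ _ (fun j => hDn _) fun j => ?_
          exact Metric.infDist_le_infDist_add_dist
      _ ≤ (∑ i, (∑ j, w i j * D (a j) ^ p) ^ (q/p)) ^ (1/q)
            + (∑ i, (∑ j, w i j * dist j (a j) ^ p) ^ (q/p)) ^ (1/q) :=
          mixmink w hw p q hp hq _ _ (fun j => hDn _) (fun j => dist_nonneg)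
      _ = _ := by
          congr 2
          exact Finset.sum_congr rfl fun i _ => by rw [hkey i]
end

section
/- Let 1 ≤ q ≤ p < ∞, let K' be a finite set, let β ∈ (0, 1/5], and let x_ℓ ∈ [β, 1/5] for each ℓ ∈ K'. Let a_{iℓ} ≥ 0 for i ∈ [n], ℓ ∈ K', and let B ≥ 0 satisfy Σ_{i=1}^n (Σ_{ℓ∈K'} x_ℓ^{p/q}·a_{iℓ})^{q/p} ≤ B^q. Let (χ_ℓ)_{ℓ∈K'} be independent Bernoulli random variables with P(χ_ℓ = 1) = 5·x_ℓ, and let Z'_i = Σ_{ℓ∈K'} χ_ℓ·a_{iℓ}. Then E[(Σ_{i=1}^n (Z'_i)^{q/p})^{1/q}] ≤ 5^{1/p}·β^{−(p−q)/(pq)}·B. -/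
open MeasureTheory ProbabilityTheory

/-- Auxiliary: Jensen's inequality `E[f^r] ≤ (E f)^r` for `0 < r ≤ 1` and `f ≥ 0`. -/
lemma jensen_rpow_aux {Ω : Type} [MeasurableSpace Ω] (μ : Measure Ω) [IsProbabilityMeasure μ]
    (r : ℝ) (hr0 : 0 < r) (hr1 : r ≤ 1) (f : Ω → ℝ) (hf : ∀ ω, 0 ≤ f ω)
    (hfi : Integrable f μ) (hgi : Integrable (fun ω => f ω ^ r) μ) :
    ∫ ω, f ω ^ r ∂μ ≤ (∫ ω, f ω ∂μ) ^ r := by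
  rcases eq_or_lt_of_le hr1 with h | h
  · subst h; simp
  · have hcc : ConcaveOn ℝ (Set.Ici 0) (fun t : ℝ => t ^ r) :=
      (Real.strictConcaveOn_rpow hr0 h).concaveOn
    have hcont : ContinuousOn (fun t : ℝ => t ^ r) (Set.Ici 0) := fun t _ =>
      (Real.continuousAt_rpow_const t r (Or.inr hr0.le)).continuousWithinAt
    exact hcc.le_map_integral hcont isClosed_Ici (MeasureTheory.ae_of_all _ hf) hfi hgi

/-- Core probabilistic estimate for the randomized rounding in the regime
`p ≥ q`. Centers `ℓ ∈ K'` are closed independently with probability `5x_ℓ`, where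
`x_ℓ ∈ [β, 1/5]`, and if `∑_i (∑_ℓ x_ℓ^{p/q}·a_{iℓ})^{q/p} ≤ B^q`, then the expected
`(ℓ_{q/p}, 1/q)`-aggregated cost is at most `5^{1/p}·β^{−(p−q)/(pq)}·B`. -/
theorem randomized_rounding_p_ge_q
    (p q : ℝ) (hq : 1 ≤ q) (hqp : q ≤ p)
    (K' : Type) [Fintype K'] (n : ℕ)
    (β : ℝ) (hβ0 : 0 < β) (hβ : β ≤ 1/5)
    (x : K' → ℝ) (hx : ∀ ℓ, β ≤ x ℓ ∧ x ℓ ≤ 1/5)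
    (a : Fin n → K' → ℝ) (ha : ∀ i ℓ, 0 ≤ a i ℓ)
    (B : ℝ) (hB : 0 ≤ B)
    (hcon : ∑ i, (∑ ℓ, x ℓ ^ (p/q) * a i ℓ) ^ (q/p) ≤ B ^ q)
    (Ω : Type) [MeasurableSpace Ω] (μ : Measure Ω) [IsProbabilityMeasure μ]
    (χ : K' → Ω → ℝ) (hmeas : ∀ ℓ, Measurable (χ ℓ))
    (hind : iIndepFun χ μ)
    (h01 : ∀ ℓ ω, χ ℓ ω = 0 ∨ χ ℓ ω = 1)
    (hber : ∀ ℓ, μ {ω | χ ℓ ω = 1} = ENNReal.ofReal (5 * x ℓ)) :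
    ∫ ω, (∑ i, (∑ ℓ, χ ℓ ω * a i ℓ) ^ (q/p)) ^ (1/q) ∂μ
      ≤ (5:ℝ) ^ (1/p) * β ^ (-((p - q)/(p*q))) * B := by
  classical
  have hq0 : (0:ℝ) < q := lt_of_lt_of_le zero_lt_one hq
  have hp0 : (0:ℝ) < p := lt_of_lt_of_le hq0 hqp
  have hr1 : (0:ℝ) < q / p := div_pos hq0 hp0
  have hr1le : q / p ≤ 1 := (div_le_one hp0).mpr hqp
  have hr2 : (0:ℝ) < 1 / q := by positivity
  have hr2le : 1 / q ≤ 1 := by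
    rw [div_le_one hq0]; linarith
  have hχ0 : ∀ ℓ ω, 0 ≤ χ ℓ ω := fun ℓ ω => by rcases h01 ℓ ω with h | h <;> simp [h]
  have hχ1 : ∀ ℓ ω, χ ℓ ω ≤ 1 := fun ℓ ω => by rcases h01 ℓ ω with h | h <;> simp [h]
  -- continuity/measurability of t ↦ t ^ r for r ≥ 0
  have hcontr : ∀ r : ℝ, 0 ≤ r → Continuous (fun t : ℝ => t ^ r) := fun r hr =>
    continuous_iff_continuousAt.mpr fun t => Real.continuousAt_rpow_const t r (Or.inr hr)
  set Z : Fin n → Ω → ℝ := fun i ω => ∑ ℓ, χ ℓ ω * a i ℓ with hZdef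
  have hZ0 : ∀ i ω, 0 ≤ Z i ω := fun i ω =>
    Finset.sum_nonneg fun ℓ _ => mul_nonneg (hχ0 ℓ ω) (ha i ℓ)
  have hZle : ∀ i ω, Z i ω ≤ ∑ ℓ, a i ℓ := fun i ω =>
    Finset.sum_le_sum fun ℓ _ => by
      nlinarith [hχ1 ℓ ω, hχ0 ℓ ω, ha i ℓ]
  have hZmeas : ∀ i, Measurable (Z i) := fun i =>
    Finset.measurable_sum _ fun ℓ _ => (hmeas ℓ).mul_const _
  have hZint : ∀ i, Integrable (Z i) μ := fun i =>
    (integrable_const (∑ ℓ, a i ℓ)).mono' (hZmeas i).aestronglyMeasurable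
      (MeasureTheory.ae_of_all _ fun ω => by
        rw [Real.norm_of_nonneg (hZ0 i ω)]; exact hZle i ω)
  have hZrmeas : ∀ i, Measurable (fun ω => Z i ω ^ (q/p)) := fun i =>
    (hcontr (q/p) hr1.le).measurable.comp (hZmeas i)
  have hZrint : ∀ i, Integrable (fun ω => Z i ω ^ (q/p)) μ := fun i =>
    (integrable_const ((∑ ℓ, a i ℓ) ^ (q/p))).mono' (hZrmeas i).aestronglyMeasurable
      (MeasureTheory.ae_of_all _ fun ω => by
        rw [Real.norm_of_nonneg (Real.rpow_nonneg (hZ0 i ω) _)]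
        exact Real.rpow_le_rpow (hZ0 i ω) (hZle i ω) hr1.le)
  set Y : Ω → ℝ := fun ω => ∑ i, Z i ω ^ (q/p) with hYdef
  have hY0 : ∀ ω, 0 ≤ Y ω := fun ω =>
    Finset.sum_nonneg fun i _ => Real.rpow_nonneg (hZ0 i ω) _
  have hYint : Integrable Y μ := integrable_finset_sum _ fun i _ => hZrint i
  have hYmeas : Measurable Y := Finset.measurable_sum _ fun i _ => hZrmeas i
  have hYle : ∀ ω, Y ω ≤ ∑ i, (∑ ℓ, a i ℓ) ^ (q/p) := fun ω =>
    Finset.sum_le_sum fun i _ => Real.rpow_le_rpow (hZ0 i ω) (hZle i ω) hr1.le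
  have hYr_int : Integrable (fun ω => Y ω ^ (1/q)) μ :=
    (integrable_const ((∑ i, (∑ ℓ, a i ℓ) ^ (q/p)) ^ (1/q))).mono'
      (((hcontr (1/q) hr2.le).measurable.comp hYmeas).aestronglyMeasurable)
      (MeasureTheory.ae_of_all _ fun ω => by
        rw [Real.norm_of_nonneg (Real.rpow_nonneg (hY0 ω) _)]
        exact Real.rpow_le_rpow (hY0 ω) (hYle ω) hr2.le)
  -- expectation of χ ℓ
  have hχint : ∀ ℓ, Integrable (χ ℓ) μ := fun ℓ =>
    (integrable_const (1:ℝ)).mono' (hmeas ℓ).aestronglyMeasurable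
      (MeasureTheory.ae_of_all _ fun ω => by
        rw [Real.norm_of_nonneg (hχ0 ℓ ω)]; exact hχ1 ℓ ω)
  have hx0 : ∀ ℓ, 0 < x ℓ := fun ℓ => lt_of_lt_of_le hβ0 (hx ℓ).1
  have hEχ : ∀ ℓ, ∫ ω, χ ℓ ω ∂μ = 5 * x ℓ := by
    intro ℓ
    have hset : MeasurableSet {ω | χ ℓ ω = 1} := (hmeas ℓ) (measurableSet_singleton 1)
    have hind1 : χ ℓ = Set.indicator {ω | χ ℓ ω = 1} 1 := by
      funext ω
      rcases h01 ℓ ω with h | h <;>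
        simp [Set.indicator_apply, Set.mem_setOf_eq, h]
    rw [hind1, MeasureTheory.integral_indicator_one hset, measureReal_def, hber ℓ,
      ENNReal.toReal_ofReal (by nlinarith [hx0 ℓ])]
  -- expectation of Z i and its bound
  have hEZ : ∀ i, ∫ ω, Z i ω ∂μ = ∑ ℓ, 5 * x ℓ * a i ℓ := by
    intro i
    rw [hZdef]
    rw [MeasureTheory.integral_finset_sum _ fun ℓ _ => (hχint ℓ).mul_const _]
    exact Finset.sum_congr rfl fun ℓ _ => by
      rw [MeasureTheory.integral_mul_const, hEχ ℓ]
  set D : ℝ := 5 * β ^ (1 - p/q) with hDdef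
  have hD0 : 0 ≤ D := by positivity
  set C : Fin n → ℝ := fun i => ∑ ℓ, x ℓ ^ (p/q) * a i ℓ with hCdef
  have hC0 : ∀ i, 0 ≤ C i := fun i =>
    Finset.sum_nonneg fun ℓ _ => mul_nonneg (Real.rpow_nonneg (hx0 ℓ).le _) (ha i ℓ)
  have hEZle : ∀ i, ∫ ω, Z i ω ∂μ ≤ D * C i := by
    intro i
    rw [hEZ i, hCdef, Finset.mul_sum]
    refine Finset.sum_le_sum fun ℓ _ => ?_
    have hxsplit : x ℓ = x ℓ ^ (1 - p/q) * x ℓ ^ (p/q) := by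
      rw [← Real.rpow_add (hx0 ℓ)]
      norm_num
    have hxple : x ℓ ^ (1 - p/q) ≤ β ^ (1 - p/q) := by
      refine Real.rpow_le_rpow_of_nonpos hβ0 (hx ℓ).1 ?_
      have : 1 ≤ p / q := (one_le_div hq0).mpr hqp
      linarith
    calc 5 * x ℓ * a i ℓ = 5 * (x ℓ ^ (1 - p/q) * x ℓ ^ (p/q)) * a i ℓ := by rw [← hxsplit]
      _ ≤ 5 * (β ^ (1 - p/q) * x ℓ ^ (p/q)) * a i ℓ := by
          have h1 : (0:ℝ) ≤ x ℓ ^ (p/q) := Real.rpow_nonneg (hx0 ℓ).le _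
          have h2 := mul_le_mul_of_nonneg_right
            (mul_le_mul_of_nonneg_right hxple h1) (ha i ℓ)
          nlinarith [h2]
      _ = D * (x ℓ ^ (p/q) * a i ℓ) := by rw [hDdef]; ring
  -- Jensen for each Z i
  have hstep3 : ∀ i, ∫ ω, Z i ω ^ (q/p) ∂μ ≤ (D * C i) ^ (q/p) := by
    intro i
    calc ∫ ω, Z i ω ^ (q/p) ∂μ ≤ (∫ ω, Z i ω ∂μ) ^ (q/p) :=
          jensen_rpow_aux μ (q/p) hr1 hr1le (Z i) (hZ0 i) (hZint i) (hZrint i)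
      _ ≤ (D * C i) ^ (q/p) := by
          refine Real.rpow_le_rpow ?_ (hEZle i) hr1.le
          exact MeasureTheory.integral_nonneg (hZ0 i)
  -- bound on ∫ Y
  have hEY : ∫ ω, Y ω ∂μ ≤ D ^ (q/p) * B ^ q := by
    rw [hYdef]
    rw [MeasureTheory.integral_finset_sum _ fun i _ => hZrint i]
    calc ∑ i, ∫ ω, Z i ω ^ (q/p) ∂μ ≤ ∑ i, (D * C i) ^ (q/p) :=
          Finset.sum_le_sum fun i _ => hstep3 i
      _ = ∑ i, D ^ (q/p) * C i ^ (q/p) :=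
          Finset.sum_congr rfl fun i _ => Real.mul_rpow hD0 (hC0 i)
      _ = D ^ (q/p) * ∑ i, C i ^ (q/p) := by rw [← Finset.mul_sum]
      _ ≤ D ^ (q/p) * B ^ q := by
          refine mul_le_mul_of_nonneg_left hcon (Real.rpow_nonneg hD0 _)
  -- Jensen for Y and final computation
  have hmain : ∫ ω, Y ω ^ (1/q) ∂μ ≤ (D ^ (q/p) * B ^ q) ^ (1/q) := by
    calc ∫ ω, Y ω ^ (1/q) ∂μ ≤ (∫ ω, Y ω ∂μ) ^ (1/q) :=
          jensen_rpow_aux μ (1/q) hr2 hr2le Y hY0 hYint hYr_int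
      _ ≤ (D ^ (q/p) * B ^ q) ^ (1/q) := by
          refine Real.rpow_le_rpow (MeasureTheory.integral_nonneg hY0) hEY hr2.le
  have hfinal : (D ^ (q/p) * B ^ q) ^ (1/q)
      = (5:ℝ) ^ (1/p) * β ^ (-((p - q)/(p*q))) * B := by
    have hq' : q ≠ 0 := ne_of_gt hq0
    have hp' : p ≠ 0 := ne_of_gt hp0
    rw [Real.mul_rpow (Real.rpow_nonneg hD0 _) (Real.rpow_nonneg hB _),
      ← Real.rpow_mul hD0, ← Real.rpow_mul hB]
    have h1 : q / p * (1/q) = 1/p := by field_simp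
    have h2 : q * (1/q) = 1 := by field_simp
    rw [h1, h2, Real.rpow_one, hDdef,
      Real.mul_rpow (by norm_num : (0:ℝ) ≤ 5) (Real.rpow_nonneg hβ0.le _),
      ← Real.rpow_mul hβ0.le]
    have h3 : (1 - p/q) * (1/p) = -((p - q)/(p*q)) := by
      field_simp
      ring_nf
    rw [h3]
  calc ∫ ω, (∑ i, (∑ ℓ, χ ℓ ω * a i ℓ) ^ (q/p)) ^ (1/q) ∂μ
      = ∫ ω, Y ω ^ (1/q) ∂μ := rfl
    _ ≤ (D ^ (q/p) * B ^ q) ^ (1/q) := hmain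
    _ = (5:ℝ) ^ (1/p) * β ^ (-((p - q)/(p*q))) * B := hfinal
end

section
/- There exists a universal constant C > 0 such that the following holds. Let 1 ≤ p ≤ q < ∞, let K' be a finite set, let x_ℓ ∈ [0, 1/5] for each ℓ ∈ K', let v_{iℓ} ≥ 0 for i ∈ [n], ℓ ∈ K', and let B ≥ 0 satisfy both Σ_{i=1}^n (Σ_{ℓ∈K'} x_ℓ·v_{iℓ})^{q/p} ≤ B^q and Σ_{i=1}^n Σ_{ℓ∈K'} x_ℓ·v_{iℓ}^{q/p} ≤ B^q. Let (χ_ℓ)_{ℓ∈K'} be independent Bernoulli random variables with P(χ_ℓ = 1) = 5·x_ℓ, and let Z_i = Σ_{ℓ∈K'} χ_ℓ·v_{iℓ}. Then E[(Σ_{i=1}^n Z_i^{q/p})^{1/q}] ≤ C·(q/ln(1 + q/p))^{1/p}·B. -/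
set_option maxHeartbeats 2000000

open MeasureTheory ProbabilityTheory Finset

namespace RRaux

lemma my_le_of_forall_pos {a b : ℝ} (h : ∀ ε : ℝ, 0 < ε → a ≤ b + ε) : a ≤ b := by
  by_contra hlt
  push_neg at hlt
  have := h ((a - b)/2) (by linarith)
  linarith

lemma add_rpow_le {x y c : ℝ} (hx : 0 ≤ x) (hy : 0 ≤ y) (hc : 0 ≤ c) (hc1 : c ≤ 1) :
    (x + y) ^ c ≤ x ^ c + y ^ c := by
  have h := NNReal.rpow_add_le_add_rpow x.toNNReal y.toNNReal hc hc1
  have h' := NNReal.coe_le_coe.2 h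
  push_cast at h'
  rwa [Real.coe_toNNReal x hx, Real.coe_toNNReal y hy] at h'

lemma rpow_sum_le {ι : Type*} (s : Finset ι) (g : ι → ℝ) (hg : ∀ i, 0 ≤ g i)
    {c : ℝ} (hc : 0 < c) (hc1 : c ≤ 1) :
    (∑ i ∈ s, g i) ^ c ≤ ∑ i ∈ s, g i ^ c := by
  induction s using Finset.cons_induction with
  | empty => simp [Real.zero_rpow hc.ne']
  | cons a s ha ih =>
    rw [Finset.sum_cons, Finset.sum_cons]
    calc (g a + ∑ i ∈ s, g i) ^ c ≤ g a ^ c + (∑ i ∈ s, g i) ^ c :=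
          add_rpow_le (hg a) (Finset.sum_nonneg fun i _ => hg i) hc.le hc1
    _ ≤ _ := by linarith

lemma add_rpow_le_two_rpow {x y α : ℝ} (hx : 0 ≤ x) (hy : 0 ≤ y) (hα : 0 ≤ α) :
    (x + y) ^ α ≤ 2 ^ α * (x ^ α + y ^ α) := by
  have hmax0 : 0 ≤ max x y := le_trans hx (le_max_left _ _)
  have h1 : x + y ≤ 2 * max x y := by
    rcases le_total x y with h | h
    · rw [max_eq_right h]; linarith
    · rw [max_eq_left h]; linarith
  have h2 : (max x y) ^ α ≤ x ^ α + y ^ α := by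
    rcases max_cases x y with ⟨h, _⟩ | ⟨h, _⟩ <;> rw [h]
    · linarith [Real.rpow_nonneg hy α]
    · linarith [Real.rpow_nonneg hx α]
  calc (x + y) ^ α ≤ (2 * max x y) ^ α := Real.rpow_le_rpow (by linarith) h1 hα
  _ = 2 ^ α * (max x y) ^ α := Real.mul_rpow (by norm_num) hmax0
  _ ≤ 2 ^ α * (x ^ α + y ^ α) :=
      mul_le_mul_of_nonneg_left h2 (Real.rpow_nonneg (by norm_num) α)

variable {Ω : Type*} [MeasurableSpace Ω] {μ : Measure Ω} [IsProbabilityMeasure μ]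

lemma intg {f : Ω → ℝ} {C : ℝ} (hf : Measurable f) (h0 : ∀ ω, 0 ≤ f ω)
    (hC : ∀ ω, f ω ≤ C) : Integrable f μ := by
  refine (integrable_const C).mono' hf.aestronglyMeasurable ?_
  filter_upwards with ω
  rw [Real.norm_eq_abs, abs_of_nonneg (h0 ω)]
  exact hC ω

lemma jensen_rpow {f : Ω → ℝ} {C : ℝ} (hf : Measurable f) (h0 : ∀ ω, 0 ≤ f ω)
    (hC : ∀ ω, f ω ≤ C) {c : ℝ} (hc : 0 < c) (hc1 : c ≤ 1) :
    ∫ ω, f ω ^ c ∂μ ≤ (∫ ω, f ω ∂μ) ^ c := by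
  have hCmax : ∀ ω, f ω ≤ max C 0 := fun ω => le_max_of_le_left (hC ω)
  have hint : Integrable f μ := intg hf h0 hCmax
  have hmeasc : Measurable fun ω => f ω ^ c := hf.pow measurable_const
  have hintc : Integrable (fun ω => f ω ^ c) μ := by
    refine intg hmeasc (fun ω => Real.rpow_nonneg (h0 ω) c) (C := (max C 0) ^ c) ?_
    exact fun ω => Real.rpow_le_rpow (h0 ω) (hCmax ω) hc.le
  have hI0 : 0 ≤ ∫ ω, f ω ∂μ := integral_nonneg h0
  rcases hI0.eq_or_lt with h | hIpos
  · have hae : f =ᵐ[μ] 0 := (integral_eq_zero_iff_of_nonneg h0 hint).1 h.symm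
    have hz : ∫ ω, f ω ^ c ∂μ = 0 := by
      rw [integral_congr_ae (g := fun _ => (0 : ℝ)) ?_, integral_zero]
      filter_upwards [hae] with ω hω
      simp only [Pi.zero_apply] at hω
      simp [hω, Real.zero_rpow hc.ne']
    rw [hz, ← h, Real.zero_rpow hc.ne']
  · set I := ∫ ω, f ω ∂μ with hIdef
    have hone : I ^ (1 - c) * I ^ (c - 1) = 1 := by
      rw [← Real.rpow_add hIpos]
      norm_num
    have key : ∀ ω, f ω ^ c ≤ (c * f ω + (1 - c) * I) * I ^ (c - 1) := by
      intro ω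
      have hgm := Real.geom_mean_le_arith_mean2_weighted hc.le (by linarith : (0:ℝ) ≤ 1 - c)
        (h0 ω) hI0 (by ring)
      calc f ω ^ c = f ω ^ c * (I ^ (1 - c) * I ^ (c - 1)) := by rw [hone, mul_one]
      _ = (f ω ^ c * I ^ (1 - c)) * I ^ (c - 1) := by ring
      _ ≤ (c * f ω + (1 - c) * I) * I ^ (c - 1) :=
          mul_le_mul_of_nonneg_right hgm (Real.rpow_nonneg hI0 _)
    have hintr : Integrable (fun ω => (c * f ω + (1 - c) * I) * I ^ (c - 1)) μ :=
      ((hint.const_mul c).add (integrable_const _)).mul_const _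
    calc ∫ ω, f ω ^ c ∂μ ≤ ∫ ω, (c * f ω + (1 - c) * I) * I ^ (c - 1) ∂μ :=
        integral_mono hintc hintr key
    _ = (∫ ω, (c * f ω + (1 - c) * I) ∂μ) * I ^ (c - 1) := integral_mul_const _ _
    _ = (c * I + (1 - c) * I) * I ^ (c - 1) := by
        rw [integral_add (hint.const_mul c) (integrable_const _), integral_const_mul,
          integral_const]
        simp [measure_univ, ← hIdef]
    _ = I * I ^ (c - 1) := by ring
    _ = I ^ c := by
        nth_rewrite 1 [← Real.rpow_one I]
        rw [← Real.rpow_add hIpos]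
        norm_num


section Core

variable {Ω : Type*} [MeasurableSpace Ω] {μ : Measure Ω} [IsProbabilityMeasure μ]
variable {ι : Type*} [Fintype ι]

lemma measurable_Z (χ : ι → Ω → ℝ) (hmeas : ∀ ℓ, Measurable (χ ℓ)) (a : ι → ℝ) :
    Measurable fun ω => ∑ ℓ, χ ℓ ω * a ℓ :=
  Finset.measurable_sum _ fun ℓ _ => (hmeas ℓ).mul_const _

lemma chi_nonneg {χ : ι → Ω → ℝ} (h01 : ∀ ℓ ω, χ ℓ ω = 0 ∨ χ ℓ ω = 1) (ℓ : ι) (ω : Ω) :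
    0 ≤ χ ℓ ω := by rcases h01 ℓ ω with h | h <;> rw [h] <;> norm_num

lemma chi_le_one {χ : ι → Ω → ℝ} (h01 : ∀ ℓ ω, χ ℓ ω = 0 ∨ χ ℓ ω = 1) (ℓ : ι) (ω : Ω) :
    χ ℓ ω ≤ 1 := by rcases h01 ℓ ω with h | h <;> rw [h] <;> norm_num

lemma Z_nonneg {χ : ι → Ω → ℝ} (h01 : ∀ ℓ ω, χ ℓ ω = 0 ∨ χ ℓ ω = 1)
    {a : ι → ℝ} (ha : ∀ ℓ, 0 ≤ a ℓ) (ω : Ω) : 0 ≤ ∑ ℓ, χ ℓ ω * a ℓ :=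
  Finset.sum_nonneg fun ℓ _ => mul_nonneg (chi_nonneg h01 ℓ ω) (ha ℓ)

lemma Z_le {χ : ι → Ω → ℝ} (h01 : ∀ ℓ ω, χ ℓ ω = 0 ∨ χ ℓ ω = 1)
    {a : ι → ℝ} (ha : ∀ ℓ, 0 ≤ a ℓ) (ω : Ω) : ∑ ℓ, χ ℓ ω * a ℓ ≤ ∑ ℓ, a ℓ :=
  Finset.sum_le_sum fun ℓ _ => by
    have := chi_le_one h01 ℓ ω
    nlinarith [ha ℓ, chi_nonneg h01 ℓ ω]

lemma int_Z_pow {χ : ι → Ω → ℝ} (hmeas : ∀ ℓ, Measurable (χ ℓ))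
    (h01 : ∀ ℓ ω, χ ℓ ω = 0 ∨ χ ℓ ω = 1) {a : ι → ℝ} (ha : ∀ ℓ, 0 ≤ a ℓ) (n : ℕ) :
    Integrable (fun ω => (∑ ℓ, χ ℓ ω * a ℓ) ^ n) μ := by
  refine intg ((measurable_Z χ hmeas a).pow_const n)
    (fun ω => pow_nonneg (Z_nonneg h01 ha ω) n) (C := (∑ ℓ, a ℓ) ^ n) ?_
  exact fun ω => pow_le_pow_left₀ (Z_nonneg h01 ha ω) (Z_le h01 ha ω) n

lemma int_Z_rpow {χ : ι → Ω → ℝ} (hmeas : ∀ ℓ, Measurable (χ ℓ))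
    (h01 : ∀ ℓ ω, χ ℓ ω = 0 ∨ χ ℓ ω = 1) {a : ι → ℝ} (ha : ∀ ℓ, 0 ≤ a ℓ) (γ : ℝ)
    (hγ : 0 ≤ γ) :
    Integrable (fun ω => (∑ ℓ, χ ℓ ω * a ℓ) ^ γ) μ := by
  refine intg ((measurable_Z χ hmeas a).pow measurable_const)
    (fun ω => Real.rpow_nonneg (Z_nonneg h01 ha ω) γ) (C := (∑ ℓ, a ℓ) ^ γ) ?_
  exact fun ω => Real.rpow_le_rpow (Z_nonneg h01 ha ω) (Z_le h01 ha ω) hγ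

lemma p_nonneg {χ : ι → Ω → ℝ} (h01 : ∀ ℓ ω, χ ℓ ω = 0 ∨ χ ℓ ω = 1) (ℓ : ι) :
    0 ≤ ∫ ω, χ ℓ ω ∂μ :=
  integral_nonneg fun ω => chi_nonneg h01 ℓ ω

/-- The key one-step recursion, for a fractional exponent `(k-1) + β` with `β ∈ (0,1]`. -/
lemma frac_step (χ : ι → Ω → ℝ) (hmeas : ∀ ℓ, Measurable (χ ℓ))
    (hind : iIndepFun χ μ)
    (h01 : ∀ ℓ ω, χ ℓ ω = 0 ∨ χ ℓ ω = 1)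
    (a : ι → ℝ) (ha : ∀ ℓ, 0 ≤ a ℓ) (k : ℕ) (hk : 1 ≤ k)
    {β : ℝ} (hβ : 0 < β) (hβ1 : β ≤ 1) :
    ∫ ω, (∑ ℓ, χ ℓ ω * a ℓ) ^ (((k - 1 : ℕ) : ℝ) + β) ∂μ ≤
      ∑ j ∈ Finset.range k, ((k-1).choose j : ℝ) *
        (∑ ℓ, (∫ ω, χ ℓ ω ∂μ) * a ℓ ^ (β + (j : ℝ))) *
        ∫ ω, (∑ ℓ, χ ℓ ω * a ℓ) ^ (k - 1 - j) ∂μ := by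
  classical
  set n := k - 1 with hn
  have hn1 : n + 1 = k := by omega
  have hZm : Measurable fun ω => ∑ ℓ, χ ℓ ω * a ℓ := measurable_Z χ hmeas a
  have hZ0 : ∀ ω, 0 ≤ ∑ ℓ, χ ℓ ω * a ℓ := Z_nonneg h01 ha
  have hZle : ∀ ω, ∑ ℓ, χ ℓ ω * a ℓ ≤ ∑ ℓ, a ℓ := Z_le h01 ha
  have hA0 : 0 ≤ ∑ ℓ, a ℓ := Finset.sum_nonneg fun ℓ _ => ha ℓ
  -- pointwise bound
  have hpt : ∀ ω, (∑ ℓ, χ ℓ ω * a ℓ) ^ ((n : ℝ) + β) ≤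
      ∑ ℓ, a ℓ ^ β * (χ ℓ ω * (∑ m, χ m ω * a m) ^ n) := by
    intro ω
    have h1 : (∑ ℓ, χ ℓ ω * a ℓ) ^ ((n : ℝ) + β)
        = (∑ ℓ, χ ℓ ω * a ℓ) ^ n * (∑ ℓ, χ ℓ ω * a ℓ) ^ β := by
      rw [Real.rpow_add' (hZ0 ω) (by positivity), Real.rpow_natCast]
    have h2 : (∑ ℓ, χ ℓ ω * a ℓ) ^ β ≤ ∑ ℓ, χ ℓ ω * a ℓ ^ β := by
      refine (rpow_sum_le Finset.univ (fun ℓ => χ ℓ ω * a ℓ)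
        (fun ℓ => mul_nonneg (chi_nonneg h01 ℓ ω) (ha ℓ)) hβ hβ1).trans
        (le_of_eq (Finset.sum_congr rfl fun ℓ _ => ?_))
      rcases h01 ℓ ω with h | h <;> simp [h, Real.zero_rpow hβ.ne']
    calc (∑ ℓ, χ ℓ ω * a ℓ) ^ ((n : ℝ) + β)
        = (∑ ℓ, χ ℓ ω * a ℓ) ^ n * (∑ ℓ, χ ℓ ω * a ℓ) ^ β := h1
    _ ≤ (∑ ℓ, χ ℓ ω * a ℓ) ^ n * ∑ ℓ, χ ℓ ω * a ℓ ^ β :=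
        mul_le_mul_of_nonneg_left h2 (pow_nonneg (hZ0 ω) n)
    _ = ∑ ℓ, a ℓ ^ β * (χ ℓ ω * (∑ m, χ m ω * a m) ^ n) := by
        rw [Finset.mul_sum]
        exact Finset.sum_congr rfl fun ℓ _ => by ring
  -- integrability of each term
  have hint_term : ∀ ℓ, Integrable
      (fun ω => a ℓ ^ β * (χ ℓ ω * (∑ m, χ m ω * a m) ^ n)) μ := by
    intro ℓ
    refine intg (((hmeas ℓ).mul (hZm.pow_const n)).const_mul _)
      (fun ω => mul_nonneg (Real.rpow_nonneg (ha ℓ) β)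
        (mul_nonneg (chi_nonneg h01 ℓ ω) (pow_nonneg (hZ0 ω) n)))
      (C := a ℓ ^ β * (∑ m, a m) ^ n) ?_
    intro ω
    refine mul_le_mul_of_nonneg_left ?_ (Real.rpow_nonneg (ha ℓ) β)
    calc χ ℓ ω * (∑ m, χ m ω * a m) ^ n ≤ 1 * (∑ m, a m) ^ n := by
          refine mul_le_mul (chi_le_one h01 ℓ ω)
            (pow_le_pow_left₀ (hZ0 ω) (hZle ω) n) (pow_nonneg (hZ0 ω) n) zero_le_one
    _ = (∑ m, a m) ^ n := one_mul _
  -- step 1-2 : integrate the pointwise bound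
  have step12 : ∫ ω, (∑ ℓ, χ ℓ ω * a ℓ) ^ ((n : ℝ) + β) ∂μ ≤
      ∑ ℓ, a ℓ ^ β * ∫ ω, χ ℓ ω * (∑ m, χ m ω * a m) ^ n ∂μ := by
    calc ∫ ω, (∑ ℓ, χ ℓ ω * a ℓ) ^ ((n : ℝ) + β) ∂μ
        ≤ ∫ ω, ∑ ℓ, a ℓ ^ β * (χ ℓ ω * (∑ m, χ m ω * a m) ^ n) ∂μ :=
          integral_mono (int_Z_rpow hmeas h01 ha _ (by positivity))
            (integrable_finset_sum _ fun ℓ _ => hint_term ℓ) hpt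
    _ = ∑ ℓ, ∫ ω, a ℓ ^ β * (χ ℓ ω * (∑ m, χ m ω * a m) ^ n) ∂μ :=
          integral_finset_sum _ fun ℓ _ => hint_term ℓ
    _ = ∑ ℓ, a ℓ ^ β * ∫ ω, χ ℓ ω * (∑ m, χ m ω * a m) ^ n ∂μ :=
          Finset.sum_congr rfl fun ℓ _ => integral_const_mul _ _
  -- step C : per ℓ bound via independence and the binomial theorem
  have hC : ∀ ℓ, ∫ ω, χ ℓ ω * (∑ m, χ m ω * a m) ^ n ∂μ ≤
      (∫ ω, χ ℓ ω ∂μ) * ∑ j ∈ Finset.range k,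
        a ℓ ^ j * (∫ ω, (∑ m, χ m ω * a m) ^ (n - j) ∂μ) * (n.choose j : ℝ) := by
    intro ℓ
    set W : Ω → ℝ := fun ω => ∑ m ∈ Finset.univ.erase ℓ, χ m ω * a m with hW
    have hWm : Measurable W := Finset.measurable_sum _ fun m _ => (hmeas m).mul_const _
    have hW0 : ∀ ω, 0 ≤ W ω := fun ω =>
      Finset.sum_nonneg fun m _ => mul_nonneg (chi_nonneg h01 m ω) (ha m)
    have hWZ : ∀ ω, W ω ≤ ∑ m, χ m ω * a m := fun ω =>
      Finset.sum_le_sum_of_subset_of_nonneg (Finset.subset_univ _)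
        (fun m _ _ => mul_nonneg (chi_nonneg h01 m ω) (ha m))
    have hWle : ∀ ω, W ω ≤ ∑ m, a m := fun ω => (hWZ ω).trans (hZle ω)
    have hptC : ∀ ω, χ ℓ ω * (∑ m, χ m ω * a m) ^ n = χ ℓ ω * (a ℓ + W ω) ^ n := by
      intro ω
      rcases h01 ℓ ω with h | h
      · rw [h, zero_mul, zero_mul]
      · have hZeq : ∑ m, χ m ω * a m = a ℓ + W ω := by
          rw [← Finset.add_sum_erase Finset.univ (fun m => χ m ω * a m) (Finset.mem_univ ℓ),
            h, one_mul]
        rw [hZeq]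
    -- independence of χ ℓ and (a ℓ + W)^n
    have hin : IndepFun (χ ℓ) (fun ω => (a ℓ + W ω) ^ n) μ := by
      set g : (m : ι) → ℝ → ℝ := fun m t => if m = ℓ then t else t * a m with hg
      have hgm : ∀ m, Measurable (g m) := by
        intro m
        dsimp only [g]
        split_ifs
        · exact measurable_id
        · exact measurable_id.mul_const _
      have hind2 : iIndepFun (fun m => g m ∘ χ m) μ :=
        hind.comp g hgm
      have hsum := hind2.indepFun_finsetSum_of_notMem
        (fun m => (hgm m).comp (hmeas m)) (Finset.notMem_erase ℓ Finset.univ)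
      have e1 : g ℓ ∘ χ ℓ = χ ℓ := by funext ω; simp [g]
      have e2 : (∑ m ∈ Finset.univ.erase ℓ, (g m ∘ χ m)) = W := by
        funext ω
        rw [Finset.sum_apply]
        refine Finset.sum_congr rfl fun m hm => ?_
        have hne : m ≠ ℓ := Finset.ne_of_mem_erase hm
        simp [g, hne]
      rw [e1, e2] at hsum
      have hφ : Measurable fun t : ℝ => (a ℓ + t) ^ n :=
        (measurable_const.add measurable_id).pow_const n
      exact hsum.symm.comp measurable_id hφ
    have hintχ : Integrable (χ ℓ) μ := intg (hmeas ℓ) (chi_nonneg h01 ℓ) (chi_le_one h01 ℓ)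
    have hintP : Integrable (fun ω => (a ℓ + W ω) ^ n) μ := by
      refine intg ((measurable_const.add hWm).pow_const n)
        (fun ω => pow_nonneg (add_nonneg (ha ℓ) (hW0 ω)) n)
        (C := (a ℓ + ∑ m, a m) ^ n) ?_
      exact fun ω => pow_le_pow_left₀ (add_nonneg (ha ℓ) (hW0 ω))
        (by linarith [hWle ω]) n
    have hmul := hin.integral_mul_eq_mul_integral hintχ.aestronglyMeasurable
      hintP.aestronglyMeasurable
    have hintWj : ∀ j : ℕ, Integrable (fun ω => W ω ^ j) μ := by
      intro j
      refine intg (hWm.pow_const j) (fun ω => pow_nonneg (hW0 ω) j)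
        (C := (∑ m, a m) ^ j) (fun ω => pow_le_pow_left₀ (hW0 ω) (hWle ω) j)
    have hbin : ∫ ω, (a ℓ + W ω) ^ n ∂μ
        = ∑ j ∈ Finset.range k, a ℓ ^ j * (∫ ω, W ω ^ (n - j) ∂μ) * (n.choose j : ℝ) := by
      have hb : (fun ω => (a ℓ + W ω) ^ n)
          = fun ω => ∑ j ∈ Finset.range k, a ℓ ^ j * W ω ^ (n - j) * (n.choose j : ℝ) := by
        funext ω
        rw [add_pow, hn1]
      rw [hb, integral_finset_sum _ (fun j _ => ((hintWj (n - j)).const_mul _).mul_const _)]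
      refine Finset.sum_congr rfl fun j _ => ?_
      rw [integral_mul_const, integral_const_mul]
    have hWpowle : ∀ j : ℕ, ∫ ω, W ω ^ j ∂μ ≤ ∫ ω, (∑ m, χ m ω * a m) ^ j ∂μ := by
      intro j
      refine integral_mono (hintWj j) (int_Z_pow hmeas h01 ha j) fun ω => ?_
      exact pow_le_pow_left₀ (hW0 ω) (hWZ ω) j
    calc ∫ ω, χ ℓ ω * (∑ m, χ m ω * a m) ^ n ∂μ
        = ∫ ω, χ ℓ ω * (a ℓ + W ω) ^ n ∂μ := by
          exact integral_congr_ae (Filter.Eventually.of_forall hptC)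
    _ = (∫ ω, χ ℓ ω ∂μ) * ∫ ω, (a ℓ + W ω) ^ n ∂μ := hmul
    _ ≤ (∫ ω, χ ℓ ω ∂μ) * ∑ j ∈ Finset.range k,
          a ℓ ^ j * (∫ ω, (∑ m, χ m ω * a m) ^ (n - j) ∂μ) * (n.choose j : ℝ) := by
        rw [hbin]
        refine mul_le_mul_of_nonneg_left
          (Finset.sum_le_sum fun j _ => ?_) (p_nonneg h01 ℓ)
        refine mul_le_mul_of_nonneg_right
          (mul_le_mul_of_nonneg_left (hWpowle (n - j)) (pow_nonneg (ha ℓ) j))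
          (Nat.cast_nonneg _)
  -- combine
  have hcomb : ∑ ℓ, a ℓ ^ β * ∫ ω, χ ℓ ω * (∑ m, χ m ω * a m) ^ n ∂μ ≤
      ∑ ℓ, a ℓ ^ β * ((∫ ω, χ ℓ ω ∂μ) * ∑ j ∈ Finset.range k,
        a ℓ ^ j * (∫ ω, (∑ m, χ m ω * a m) ^ (n - j) ∂μ) * (n.choose j : ℝ)) :=
    Finset.sum_le_sum fun ℓ _ =>
      mul_le_mul_of_nonneg_left (hC ℓ) (Real.rpow_nonneg (ha ℓ) β)
  refine (step12.trans hcomb).trans (le_of_eq ?_)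
  calc ∑ ℓ, a ℓ ^ β * ((∫ ω, χ ℓ ω ∂μ) * ∑ j ∈ Finset.range k,
        a ℓ ^ j * (∫ ω, (∑ m, χ m ω * a m) ^ (n - j) ∂μ) * (n.choose j : ℝ))
      = ∑ ℓ, ∑ j ∈ Finset.range k, a ℓ ^ β * ((∫ ω, χ ℓ ω ∂μ) *
          (a ℓ ^ j * (∫ ω, (∑ m, χ m ω * a m) ^ (n - j) ∂μ) * (n.choose j : ℝ))) := by
        refine Finset.sum_congr rfl fun ℓ _ => ?_
        rw [Finset.mul_sum, Finset.mul_sum]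
  _ = ∑ j ∈ Finset.range k, ∑ ℓ, a ℓ ^ β * ((∫ ω, χ ℓ ω ∂μ) *
          (a ℓ ^ j * (∫ ω, (∑ m, χ m ω * a m) ^ (n - j) ∂μ) * (n.choose j : ℝ))) :=
        Finset.sum_comm
  _ = ∑ j ∈ Finset.range k, (n.choose j : ℝ) *
        (∑ ℓ, (∫ ω, χ ℓ ω ∂μ) * a ℓ ^ (β + (j : ℝ))) *
        ∫ ω, (∑ m, χ m ω * a m) ^ (n - j) ∂μ := by
      refine Finset.sum_congr rfl fun j _ => ?_
      rw [Finset.mul_sum, Finset.sum_mul]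
      refine Finset.sum_congr rfl fun ℓ _ => ?_
      have hsplit : a ℓ ^ (β + (j : ℝ)) = a ℓ ^ β * a ℓ ^ j := by
        rw [Real.rpow_add' (ha ℓ) (by positivity), Real.rpow_natCast]
      rw [hsplit]
      ring

/-- Integer moment bound via the Bell-type recursion. -/
lemma int_moment (χ : ι → Ω → ℝ) (hmeas : ∀ ℓ, Measurable (χ ℓ))
    (hind : iIndepFun χ μ)
    (h01 : ∀ ℓ ω, χ ℓ ω = 0 ∨ χ ℓ ω = 1)
    (a : ι → ℝ) (ha : ∀ ℓ, 0 ≤ a ℓ) {R : ℝ} (hR1 : 1 ≤ R) (K : ℕ)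
    (hgrow : ∀ i : ℕ, 1 ≤ i → i ≤ K → (1 + R) ^ (i - 1) ≤ R ^ i)
    (hs : ∀ j : ℕ, 1 ≤ j → j ≤ K → ∑ ℓ, (∫ ω, χ ℓ ω ∂μ) * a ℓ ^ j ≤ 1) :
    ∀ i, i ≤ K → ∫ ω, (∑ ℓ, χ ℓ ω * a ℓ) ^ i ∂μ ≤ R ^ i := by
  intro i
  induction i using Nat.strong_induction_on with
  | _ i ih =>
    intro hiK
    match i, ih, hiK with
    | 0, _, _ => simp
    | (m+1), ih, hiK =>
      have hfs := frac_step χ hmeas hind h01 a ha (m+1) (by omega) (β := 1) one_pos le_rfl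
      have hconv : (fun ω => (∑ ℓ, χ ℓ ω * a ℓ) ^ (((m + 1 - 1 : ℕ) : ℝ) + 1))
          = fun ω => (∑ ℓ, χ ℓ ω * a ℓ) ^ (m + 1) := by
        funext ω
        rw [show ((m + 1 - 1 : ℕ) : ℝ) + 1 = ((m + 1 : ℕ) : ℝ) by push_cast; ring,
          Real.rpow_natCast]
      rw [hconv] at hfs
      refine hfs.trans ?_
      have hstep : ∑ j ∈ Finset.range (m+1), ((m + 1 - 1).choose j : ℝ) *
          (∑ ℓ, (∫ ω, χ ℓ ω ∂μ) * a ℓ ^ ((1 : ℝ) + (j : ℝ))) *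
          ∫ ω, (∑ ℓ, χ ℓ ω * a ℓ) ^ (m + 1 - 1 - j) ∂μ
          ≤ ∑ j ∈ Finset.range (m+1), ((m).choose j : ℝ) * 1 * R ^ (m - j) := by
        refine Finset.sum_le_sum fun j hj => ?_
        have hj' : j ≤ m := by
          have := Finset.mem_range.1 hj; omega
        have hsle : ∑ ℓ, (∫ ω, χ ℓ ω ∂μ) * a ℓ ^ ((1 : ℝ) + (j : ℝ)) ≤ 1 := by
          have hc : ∀ ℓ, a ℓ ^ ((1 : ℝ) + (j : ℝ)) = a ℓ ^ (j + 1) := by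
            intro ℓ
            rw [show (1 : ℝ) + (j : ℝ) = ((j + 1 : ℕ) : ℝ) by push_cast; ring,
              Real.rpow_natCast]
          calc ∑ ℓ, (∫ ω, χ ℓ ω ∂μ) * a ℓ ^ ((1 : ℝ) + (j : ℝ))
              = ∑ ℓ, (∫ ω, χ ℓ ω ∂μ) * a ℓ ^ (j + 1) :=
                Finset.sum_congr rfl fun ℓ _ => by rw [hc ℓ]
          _ ≤ 1 := hs (j + 1) (by omega) (by omega)
        have hs0 : 0 ≤ ∑ ℓ, (∫ ω, χ ℓ ω ∂μ) * a ℓ ^ ((1 : ℝ) + (j : ℝ)) :=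
          Finset.sum_nonneg fun ℓ _ =>
            mul_nonneg (p_nonneg h01 ℓ) (Real.rpow_nonneg (ha ℓ) _)
        have hu0 : 0 ≤ ∫ ω, (∑ ℓ, χ ℓ ω * a ℓ) ^ (m + 1 - 1 - j) ∂μ :=
          integral_nonneg fun ω => pow_nonneg (Z_nonneg h01 ha ω) _
        have huR : ∫ ω, (∑ ℓ, χ ℓ ω * a ℓ) ^ (m + 1 - 1 - j) ∂μ ≤ R ^ (m - j) := by
          have h1 : m + 1 - 1 - j = m - j := by omega
          rw [h1]
          exact ih (m - j) (by omega) (by omega)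
        have hch : ((m + 1 - 1).choose j : ℝ) = ((m).choose j : ℝ) := by norm_num
        rw [hch]
        have hC0 : (0 : ℝ) ≤ ((m).choose j : ℝ) := Nat.cast_nonneg _
        refine mul_le_mul (mul_le_mul le_rfl hsle hs0 hC0) huR hu0 ?_
        exact mul_nonneg hC0 zero_le_one
      refine hstep.trans ?_
      have hbin : ∑ j ∈ Finset.range (m+1), ((m).choose j : ℝ) * 1 * R ^ (m - j)
          = (1 + R) ^ m := by
        rw [add_pow]
        refine Finset.sum_congr rfl fun j _ => ?_
        rw [one_pow]
        ring
      rw [hbin]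
      have := hgrow (m + 1) (by omega) hiK
      simpa using this

/-- Normalized core bound: if `∑ p a ≤ 1` and `∑ p a^α ≤ 1` then the `α`-th moment of
`Z = ∑ χ a` is at most `(2R)^(α+1)` with `R = 2⌈α⌉/log(1+⌈α⌉)`. -/
lemma core_norm (χ : ι → Ω → ℝ) (hmeas : ∀ ℓ, Measurable (χ ℓ))
    (hind : iIndepFun χ μ)
    (h01 : ∀ ℓ ω, χ ℓ ω = 0 ∨ χ ℓ ω = 1)
    (a : ι → ℝ) (ha : ∀ ℓ, 0 ≤ a ℓ) (α : ℝ) (hα : 1 ≤ α)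
    (hm : ∑ ℓ, (∫ ω, χ ℓ ω ∂μ) * a ℓ ≤ 1)
    (hsα : ∑ ℓ, (∫ ω, χ ℓ ω ∂μ) * a ℓ ^ α ≤ 1) :
    ∫ ω, (∑ ℓ, χ ℓ ω * a ℓ) ^ α ∂μ ≤
      (2 * (2 * (⌈α⌉₊ : ℝ) / Real.log (1 + (⌈α⌉₊ : ℝ)))) ^ (α + 1) := by
  classical
  have hα0 : (0 : ℝ) < α := lt_of_lt_of_le one_pos hα
  set k := ⌈α⌉₊ with hkdef
  have hk1 : 1 ≤ k := Nat.one_le_ceil_iff.2 hα0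
  have hkr1 : (1 : ℝ) ≤ (k : ℝ) := by exact_mod_cast hk1
  have hkα : α ≤ (k : ℝ) := Nat.le_ceil α
  have hkub : (k : ℝ) < α + 1 := Nat.ceil_lt_add_one hα0.le
  set L : ℝ := Real.log (1 + (k : ℝ)) with hLdef
  have hL : 0 < L := Real.log_pos (by linarith)
  set R : ℝ := 2 * (k : ℝ) / L with hRdef
  have hR1 : 1 ≤ R := by
    rw [hRdef, le_div_iff₀ hL]
    have := Real.log_le_sub_one_of_pos (show (0:ℝ) < 1 + (k:ℝ) by linarith)
    linarith
  have hR0 : 0 < R := lt_of_lt_of_le one_pos hR1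
  -- the growth inequality (1+R)^(k-1) ≤ R^k
  have hRpow : (1 + R) ^ (k - 1) ≤ R ^ k := by
    have hs1 : (1:ℝ) ≤ Real.sqrt (1 + (k:ℝ)) := Real.one_le_sqrt.2 (by linarith)
    have hsq : Real.sqrt (1 + (k:ℝ)) ^ 2 = 1 + (k:ℝ) := Real.sq_sqrt (by linarith)
    have hlogs : Real.log (Real.sqrt (1 + (k:ℝ))) = L / 2 := by
      rw [Real.log_sqrt (by linarith)]
    have hsle : Real.sqrt (1 + (k:ℝ)) ≤ R := by
      have h1 : Real.log (Real.sqrt (1 + (k:ℝ))) ≤ Real.sqrt (1 + (k:ℝ)) - 1 :=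
        Real.log_le_sub_one_of_pos (by linarith)
      have h2 : L * Real.sqrt (1 + (k:ℝ)) ≤ 2 * (k:ℝ) := by
        nlinarith [hsq, hs1, hlogs, h1]
      rw [hRdef, le_div_iff₀ hL]
      nlinarith
    have hexp : Real.exp (1 / R) ^ (k - 1) = Real.exp (((k - 1 : ℕ) : ℝ) / R) := by
      rw [← Real.exp_nat_mul]
      congr 1
      ring
    have h1R : 1 + R ≤ R * Real.exp (1 / R) := by
      have := Real.add_one_le_exp (1 / R)
      have h2 : R * (1 / R + 1) ≤ R * Real.exp (1 / R) :=
        mul_le_mul_of_nonneg_left this hR0.le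
      have h3 : R * (1 / R + 1) = 1 + R := by field_simp
      linarith
    have hcast : ((k - 1 : ℕ) : ℝ) = (k : ℝ) - 1 := by
      rw [Nat.cast_sub hk1]; norm_num
    have hkR : (k : ℝ) / R = L / 2 := by
      rw [hRdef]
      field_simp
    have hexple : Real.exp (((k - 1 : ℕ) : ℝ) / R) ≤ R := by
      calc Real.exp (((k - 1 : ℕ) : ℝ) / R) ≤ Real.exp ((k : ℝ) / R) := by
            apply Real.exp_le_exp.2
            rw [hcast]
            exact (div_le_div_iff_of_pos_right hR0).2 (by linarith)
      _ = Real.sqrt (1 + (k:ℝ)) := by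
            rw [hkR, ← hlogs, Real.exp_log (by linarith)]
      _ ≤ R := hsle
    calc (1 + R) ^ (k - 1) ≤ (R * Real.exp (1 / R)) ^ (k - 1) :=
          pow_le_pow_left₀ (by linarith) h1R _
    _ = R ^ (k - 1) * Real.exp (1 / R) ^ (k - 1) := mul_pow _ _ _
    _ = R ^ (k - 1) * Real.exp (((k - 1 : ℕ) : ℝ) / R) := by rw [hexp]
    _ ≤ R ^ (k - 1) * R := mul_le_mul_of_nonneg_left hexple (pow_nonneg hR0.le _)
    _ = R ^ k := by rw [← pow_succ]; congr 1; omega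
  have hgrow : ∀ i : ℕ, 1 ≤ i → i ≤ k → (1 + R) ^ (i - 1) ≤ R ^ i := by
    intro i hi1 hik
    have hcan : (1 + R) ^ (i - 1) * (1 + R) ^ (k - i) = (1 + R) ^ (k - 1) := by
      rw [← pow_add]; congr 1; omega
    have h2 : R ^ k ≤ R ^ i * (1 + R) ^ (k - i) := by
      have he : R ^ k = R ^ i * R ^ (k - i) := by rw [← pow_add]; congr 1; omega
      rw [he]
      exact mul_le_mul_of_nonneg_left
        (pow_le_pow_left₀ (by linarith) (by linarith) _) (pow_nonneg hR0.le _)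
    have h3 : (1 + R) ^ (i - 1) * (1 + R) ^ (k - i) ≤ R ^ i * (1 + R) ^ (k - i) := by
      rw [hcan]; exact hRpow.trans h2
    exact le_of_mul_le_mul_right h3 (pow_pos (by linarith) _)
  -- split into small and big parts
  set as : ι → ℝ := fun ℓ => if a ℓ ≤ 1 then a ℓ else 0 with hasdef
  set ab : ι → ℝ := fun ℓ => if a ℓ ≤ 1 then 0 else a ℓ with habdef
  have has0 : ∀ ℓ, 0 ≤ as ℓ := by
    intro ℓ; rw [hasdef]; dsimp only; split_ifs; exacts [ha ℓ, le_refl 0]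
  have hab0 : ∀ ℓ, 0 ≤ ab ℓ := by
    intro ℓ; rw [habdef]; dsimp only; split_ifs; exacts [le_refl 0, ha ℓ]
  have hasle1 : ∀ ℓ, as ℓ ≤ 1 := by
    intro ℓ; rw [hasdef]; dsimp only; split_ifs with h; exacts [h, zero_le_one]
  have haslea : ∀ ℓ, as ℓ ≤ a ℓ := by
    intro ℓ; rw [hasdef]; dsimp only; split_ifs; exacts [le_refl _, ha ℓ]
  have hsplit : ∀ ℓ, a ℓ = as ℓ + ab ℓ := by
    intro ℓ; rw [hasdef, habdef]; dsimp only; split_ifs <;> ring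
  have hZsplit : ∀ ω, ∑ ℓ, χ ℓ ω * a ℓ = (∑ ℓ, χ ℓ ω * as ℓ) + ∑ ℓ, χ ℓ ω * ab ℓ := by
    intro ω
    rw [← Finset.sum_add_distrib]
    exact Finset.sum_congr rfl fun ℓ _ => by rw [hsplit ℓ]; ring
  -- small part: integer moments + Jensen
  have hsmall : ∫ ω, (∑ ℓ, χ ℓ ω * as ℓ) ^ α ∂μ ≤ R ^ α := by
    have hms : ∀ j : ℕ, 1 ≤ j → j ≤ k → ∑ ℓ, (∫ ω, χ ℓ ω ∂μ) * as ℓ ^ j ≤ 1 := by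
      intro j hj1 hjk
      refine le_trans (Finset.sum_le_sum fun ℓ _ => ?_) hm
      refine mul_le_mul_of_nonneg_left ?_ (p_nonneg h01 ℓ)
      exact (pow_le_of_le_one (has0 ℓ) (hasle1 ℓ) (by omega)).trans (haslea ℓ)
    have hZsk : ∫ ω, (∑ ℓ, χ ℓ ω * as ℓ) ^ k ∂μ ≤ R ^ k :=
      int_moment χ hmeas hind h01 as has0 hR1 k hgrow hms k le_rfl
    have hkr0 : (0 : ℝ) < (k : ℝ) := by linarith
    have hck : (0 : ℝ) < α / (k : ℝ) := by positivity
    have hck1 : α / (k : ℝ) ≤ 1 := by rw [div_le_one hkr0]; exact hkα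
    have hpow_eq : ∀ x : ℝ, 0 ≤ x → (x ^ k) ^ (α / (k:ℝ)) = x ^ α := by
      intro x hx
      rw [← Real.rpow_natCast x k, ← Real.rpow_mul hx]
      congr 1
      field_simp
    have hjen := jensen_rpow (μ := μ)
      (f := fun ω => (∑ ℓ, χ ℓ ω * as ℓ) ^ k) (C := (∑ ℓ, as ℓ) ^ k)
      ((measurable_Z χ hmeas as).pow_const k)
      (fun ω => pow_nonneg (Z_nonneg h01 has0 ω) k)
      (fun ω => pow_le_pow_left₀ (Z_nonneg h01 has0 ω) (Z_le h01 has0 ω) k)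
      hck hck1
    have hjen' : ∫ ω, (∑ ℓ, χ ℓ ω * as ℓ) ^ α ∂μ
        ≤ (∫ ω, (∑ ℓ, χ ℓ ω * as ℓ) ^ k ∂μ) ^ (α / (k:ℝ)) := by
      refine le_trans (le_of_eq ?_) hjen
      refine integral_congr_ae (Filter.Eventually.of_forall fun ω => ?_)
      exact (hpow_eq _ (Z_nonneg h01 has0 ω)).symm
    refine hjen'.trans ?_
    calc (∫ ω, (∑ ℓ, χ ℓ ω * as ℓ) ^ k ∂μ) ^ (α / (k:ℝ))
        ≤ (R ^ k) ^ (α / (k:ℝ)) :=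
          Real.rpow_le_rpow (integral_nonneg fun ω => pow_nonneg (Z_nonneg h01 has0 ω) k)
            hZsk hck.le
    _ = R ^ α := hpow_eq R hR0.le
  -- big part: fractional recursion
  have hbig : ∫ ω, (∑ ℓ, χ ℓ ω * ab ℓ) ^ α ∂μ ≤ R ^ k := by
    set β : ℝ := α - ((k - 1 : ℕ) : ℝ) with hβdef
    have hcast : ((k - 1 : ℕ) : ℝ) = (k : ℝ) - 1 := by
      rw [Nat.cast_sub hk1]; norm_num
    have hβpos : 0 < β := by rw [hβdef, hcast]; linarith
    have hβ1 : β ≤ 1 := by rw [hβdef, hcast]; linarith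
    have hfs := frac_step χ hmeas hind h01 ab hab0 k hk1 hβpos hβ1
    have hexp : ((k - 1 : ℕ) : ℝ) + β = α := by rw [hβdef]; ring
    rw [hexp] at hfs
    refine hfs.trans ?_
    -- bound each summand
    have hbound : ∑ j ∈ Finset.range k, ((k-1).choose j : ℝ) *
        (∑ ℓ, (∫ ω, χ ℓ ω ∂μ) * ab ℓ ^ (β + (j : ℝ))) *
        ∫ ω, (∑ ℓ, χ ℓ ω * ab ℓ) ^ (k - 1 - j) ∂μ
        ≤ ∑ j ∈ Finset.range k, ((k-1).choose j : ℝ) * 1 * R ^ (k - 1 - j) := by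
      refine Finset.sum_le_sum fun j hj => ?_
      have hjk : j < k := Finset.mem_range.1 hj
      have hjcast : (j : ℝ) ≤ (k : ℝ) - 1 := by
        have : (j : ℝ) + 1 ≤ (k : ℝ) := by exact_mod_cast hjk
        linarith
      have hsle : ∑ ℓ, (∫ ω, χ ℓ ω ∂μ) * ab ℓ ^ (β + (j : ℝ)) ≤ 1 := by
        refine le_trans (Finset.sum_le_sum fun ℓ _ => ?_) hsα
        refine mul_le_mul_of_nonneg_left ?_ (p_nonneg h01 ℓ)
        by_cases h : a ℓ ≤ 1
        · have : ab ℓ = 0 := by rw [habdef]; dsimp only; rw [if_pos h]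
          rw [this, Real.zero_rpow (by positivity)]
          exact Real.rpow_nonneg (ha ℓ) α
        · have hab : ab ℓ = a ℓ := by rw [habdef]; dsimp only; rw [if_neg h]
          rw [hab]
          refine Real.rpow_le_rpow_of_exponent_le (by linarith [not_le.1 h]) ?_
          rw [hβdef, hcast]
          linarith
      have hs0 : 0 ≤ ∑ ℓ, (∫ ω, χ ℓ ω ∂μ) * ab ℓ ^ (β + (j : ℝ)) :=
        Finset.sum_nonneg fun ℓ _ =>
          mul_nonneg (p_nonneg h01 ℓ) (Real.rpow_nonneg (hab0 ℓ) _)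
      have hu0 : 0 ≤ ∫ ω, (∑ ℓ, χ ℓ ω * ab ℓ) ^ (k - 1 - j) ∂μ :=
        integral_nonneg fun ω => pow_nonneg (Z_nonneg h01 hab0 ω) _
      have huR : ∫ ω, (∑ ℓ, χ ℓ ω * ab ℓ) ^ (k - 1 - j) ∂μ ≤ R ^ (k - 1 - j) := by
        have hmb : ∀ j' : ℕ, 1 ≤ j' → j' ≤ k - 1 →
            ∑ ℓ, (∫ ω, χ ℓ ω ∂μ) * ab ℓ ^ j' ≤ 1 := by
          intro j' hj'1 hj'k
          refine le_trans (Finset.sum_le_sum fun ℓ _ => ?_) hsα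
          refine mul_le_mul_of_nonneg_left ?_ (p_nonneg h01 ℓ)
          by_cases h : a ℓ ≤ 1
          · have : ab ℓ = 0 := by rw [habdef]; dsimp only; rw [if_pos h]
            rw [this, zero_pow (by omega)]
            exact Real.rpow_nonneg (ha ℓ) α
          · have hab : ab ℓ = a ℓ := by rw [habdef]; dsimp only; rw [if_neg h]
            rw [hab, ← Real.rpow_natCast (a ℓ) j']
            refine Real.rpow_le_rpow_of_exponent_le (by linarith [not_le.1 h]) ?_
            have h1 : (j' : ℝ) ≤ (k : ℝ) - 1 := by
              have : (j' : ℝ) ≤ ((k - 1 : ℕ) : ℝ) := by exact_mod_cast hj'k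
              rwa [hcast] at this
            have h2 : (k : ℝ) - 1 ≤ α := by
              have := hβ1; rw [hβdef, hcast] at this; linarith
            linarith
        have hgrow' : ∀ i : ℕ, 1 ≤ i → i ≤ k - 1 → (1 + R) ^ (i - 1) ≤ R ^ i :=
          fun i hi1 hik => hgrow i hi1 (by omega)
        exact int_moment χ hmeas hind h01 ab hab0 hR1 (k - 1) hgrow' hmb
          (k - 1 - j) (by omega)
      have hC0 : (0 : ℝ) ≤ ((k-1).choose j : ℝ) := Nat.cast_nonneg _
      refine mul_le_mul (mul_le_mul le_rfl hsle hs0 hC0) huR hu0 ?_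
      exact mul_nonneg hC0 zero_le_one
    refine hbound.trans ?_
    have hbin : ∑ j ∈ Finset.range k, ((k-1).choose j : ℝ) * 1 * R ^ (k - 1 - j)
        = (1 + R) ^ (k - 1) := by
      rw [add_pow]
      rw [show k - 1 + 1 = k by omega]
      refine Finset.sum_congr rfl fun j _ => ?_
      rw [one_pow]
      ring
    rw [hbin]
    exact hRpow
  -- combine the two parts
  have hcomb : ∀ ω, (∑ ℓ, χ ℓ ω * a ℓ) ^ α ≤
      2 ^ α * ((∑ ℓ, χ ℓ ω * as ℓ) ^ α + (∑ ℓ, χ ℓ ω * ab ℓ) ^ α) := by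
    intro ω
    rw [hZsplit ω]
    exact add_rpow_le_two_rpow (Z_nonneg h01 has0 ω) (Z_nonneg h01 hab0 ω) hα0.le
  have hint1 : ∫ ω, (∑ ℓ, χ ℓ ω * a ℓ) ^ α ∂μ ≤
      2 ^ α * ((∫ ω, (∑ ℓ, χ ℓ ω * as ℓ) ^ α ∂μ) + ∫ ω, (∑ ℓ, χ ℓ ω * ab ℓ) ^ α ∂μ) := by
    calc ∫ ω, (∑ ℓ, χ ℓ ω * a ℓ) ^ α ∂μ
        ≤ ∫ ω, 2 ^ α * ((∑ ℓ, χ ℓ ω * as ℓ) ^ α + (∑ ℓ, χ ℓ ω * ab ℓ) ^ α) ∂μ :=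
          integral_mono (int_Z_rpow hmeas h01 ha α hα0.le)
            (((int_Z_rpow hmeas h01 has0 α hα0.le).add
              (int_Z_rpow hmeas h01 hab0 α hα0.le)).const_mul _) hcomb
    _ = 2 ^ α * ((∫ ω, (∑ ℓ, χ ℓ ω * as ℓ) ^ α ∂μ) + ∫ ω, (∑ ℓ, χ ℓ ω * ab ℓ) ^ α ∂μ) := by
          rw [integral_const_mul, integral_add (int_Z_rpow hmeas h01 has0 α hα0.le)
            (int_Z_rpow hmeas h01 hab0 α hα0.le)]
  refine hint1.trans ?_
  -- final numeric assembly
  have hRk : R ^ k ≤ R ^ (α + 1) := by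
    rw [← Real.rpow_natCast R k]
    exact Real.rpow_le_rpow_of_exponent_le hR1 (by linarith)
  have hRα : R ^ α ≤ R ^ (α + 1) :=
    Real.rpow_le_rpow_of_exponent_le hR1 (by linarith)
  have h2α : (0:ℝ) ≤ 2 ^ α := Real.rpow_nonneg (by norm_num) α
  have hfinal : 2 ^ α * ((∫ ω, (∑ ℓ, χ ℓ ω * as ℓ) ^ α ∂μ) +
      ∫ ω, (∑ ℓ, χ ℓ ω * ab ℓ) ^ α ∂μ) ≤ 2 ^ α * (2 * R ^ (α + 1)) := by
    refine mul_le_mul_of_nonneg_left ?_ h2α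
    have := hsmall.trans hRα
    have := hbig.trans hRk
    linarith
  refine hfinal.trans (le_of_eq ?_)
  rw [Real.mul_rpow (by norm_num) hR0.le]
  rw [show (2:ℝ) ^ (α + 1) = 2 ^ α * 2 by
    rw [Real.rpow_add (by norm_num : (0:ℝ) < 2), Real.rpow_one]]
  ring

/-- Unnormalized per-coordinate bound. -/
lemma per_i (χ : ι → Ω → ℝ) (hmeas : ∀ ℓ, Measurable (χ ℓ))
    (hind : iIndepFun χ μ)
    (h01 : ∀ ℓ ω, χ ℓ ω = 0 ∨ χ ℓ ω = 1)
    (v : ι → ℝ) (hv : ∀ ℓ, 0 ≤ v ℓ) (α : ℝ) (hα : 1 ≤ α) :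
    ∫ ω, (∑ ℓ, χ ℓ ω * v ℓ) ^ α ∂μ ≤
      (2 * (2 * (⌈α⌉₊ : ℝ) / Real.log (1 + (⌈α⌉₊ : ℝ)))) ^ (α + 1) *
        ((∑ ℓ, (∫ ω, χ ℓ ω ∂μ) * v ℓ) ^ α + ∑ ℓ, (∫ ω, χ ℓ ω ∂μ) * v ℓ ^ α) := by
  have hα0 : (0 : ℝ) < α := lt_of_lt_of_le one_pos hα
  set K0 : ℝ := (2 * (2 * (⌈α⌉₊ : ℝ) / Real.log (1 + (⌈α⌉₊ : ℝ)))) ^ (α + 1) with hK0def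
  have hk1 : 1 ≤ ⌈α⌉₊ := Nat.one_le_ceil_iff.2 hα0
  have hkr1 : (1 : ℝ) ≤ (⌈α⌉₊ : ℝ) := by exact_mod_cast hk1
  have hL : 0 < Real.log (1 + (⌈α⌉₊ : ℝ)) := Real.log_pos (by linarith)
  have hR1 : 1 ≤ 2 * (⌈α⌉₊ : ℝ) / Real.log (1 + (⌈α⌉₊ : ℝ)) := by
    rw [le_div_iff₀ hL]
    have := Real.log_le_sub_one_of_pos (show (0:ℝ) < 1 + (⌈α⌉₊:ℝ) by linarith)
    linarith
  have hK0 : 0 < K0 := Real.rpow_pos_of_pos (by linarith) _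
  set m : ℝ := ∑ ℓ, (∫ ω, χ ℓ ω ∂μ) * v ℓ with hmdef
  set s : ℝ := ∑ ℓ, (∫ ω, χ ℓ ω ∂μ) * v ℓ ^ α with hsdef
  have hm0 : 0 ≤ m :=
    Finset.sum_nonneg fun ℓ _ => mul_nonneg (p_nonneg h01 ℓ) (hv ℓ)
  have hs0 : 0 ≤ s :=
    Finset.sum_nonneg fun ℓ _ => mul_nonneg (p_nonneg h01 ℓ) (Real.rpow_nonneg (hv ℓ) α)
  refine my_le_of_forall_pos fun ε hε => ?_
  set δ : ℝ := ε / K0 with hδdef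
  have hδ : 0 < δ := div_pos hε hK0
  have hX0 : 0 < m ^ α + s + δ := by
    have := Real.rpow_nonneg hm0 α
    linarith
  set T : ℝ := (m ^ α + s + δ) ^ (1 / α) with hTdef
  have hT0 : 0 < T := Real.rpow_pos_of_pos hX0 _
  have hTα : T ^ α = m ^ α + s + δ := by
    rw [hTdef, ← Real.rpow_mul hX0.le]
    rw [show 1 / α * α = 1 by field_simp]
    exact Real.rpow_one _
  have hTα0 : 0 < T ^ α := by rw [hTα]; exact hX0
  -- apply the normalized bound to v / T
  have hv' : ∀ ℓ, 0 ≤ v ℓ / T := fun ℓ => div_nonneg (hv ℓ) hT0.le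
  have hm' : ∑ ℓ, (∫ ω, χ ℓ ω ∂μ) * (v ℓ / T) ≤ 1 := by
    have he : ∑ ℓ, (∫ ω, χ ℓ ω ∂μ) * (v ℓ / T) = m / T := by
      rw [hmdef, Finset.sum_div]
      exact Finset.sum_congr rfl fun ℓ _ => by ring
    rw [he, div_le_one hT0]
    calc m = (m ^ α) ^ (1 / α) := by
          rw [← Real.rpow_mul hm0]
          rw [show α * (1 / α) = 1 by field_simp]
          exact (Real.rpow_one m).symm
    _ ≤ (m ^ α + s + δ) ^ (1 / α) :=
        Real.rpow_le_rpow (Real.rpow_nonneg hm0 α) (by linarith) (by positivity)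
  have hs' : ∑ ℓ, (∫ ω, χ ℓ ω ∂μ) * (v ℓ / T) ^ α ≤ 1 := by
    have he : ∑ ℓ, (∫ ω, χ ℓ ω ∂μ) * (v ℓ / T) ^ α = s / T ^ α := by
      rw [hsdef, Finset.sum_div]
      refine Finset.sum_congr rfl fun ℓ _ => ?_
      rw [Real.div_rpow (hv ℓ) hT0.le]
      ring
    rw [he, div_le_one hTα0, hTα]
    have := Real.rpow_nonneg hm0 α
    linarith
  have hcore0 := core_norm χ hmeas hind h01 (fun ℓ => v ℓ / T) hv' α hα hm' hs'
  have hcore : ∫ ω, (∑ ℓ, χ ℓ ω * (v ℓ / T)) ^ α ∂μ ≤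
      (2 * (2 * (⌈α⌉₊ : ℝ) / Real.log (1 + (⌈α⌉₊ : ℝ)))) ^ (α + 1) := hcore0
  have hZdiv : ∀ ω, ∑ ℓ, χ ℓ ω * (v ℓ / T) = (∑ ℓ, χ ℓ ω * v ℓ) / T := by
    intro ω
    rw [Finset.sum_div]
    exact Finset.sum_congr rfl fun ℓ _ => by ring
  have hLHS : ∫ ω, (∑ ℓ, χ ℓ ω * (v ℓ / T)) ^ α ∂μ
      = (∫ ω, (∑ ℓ, χ ℓ ω * v ℓ) ^ α ∂μ) / T ^ α := by
    rw [← integral_div]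
    refine integral_congr_ae (Filter.Eventually.of_forall fun ω => ?_)
    dsimp only
    rw [hZdiv ω, Real.div_rpow (Z_nonneg h01 hv ω) hT0.le]
  rw [hLHS, div_le_iff₀ hTα0] at hcore
  calc ∫ ω, (∑ ℓ, χ ℓ ω * v ℓ) ^ α ∂μ ≤ K0 * T ^ α := hcore
  _ = K0 * (m ^ α + s) + K0 * δ := by rw [hTα]; ring
  _ = K0 * (m ^ α + s) + ε := by
      rw [hδdef, mul_div_cancel₀ _ hK0.ne']

end Core

end RRaux

open MeasureTheory ProbabilityTheory RRaux

/-- Core probabilistic estimate for the randomized rounding in the regime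
`p ≤ q` (via Latała's inequality). There is a universal constant `C > 0` such that if
centers `ℓ ∈ K'` are closed independently with probability `5x_ℓ` with `x_ℓ ∈ [0, 1/5]`,
and both `∑_i (∑_ℓ x_ℓ v_{iℓ})^{q/p} ≤ B^q` and `∑_i ∑_ℓ x_ℓ v_{iℓ}^{q/p} ≤ B^q`, then
the expected aggregated cost is at most `C·(q/ln(1 + q/p))^{1/p}·B`. -/
theorem randomized_rounding_p_le_q :
    ∃ C : ℝ, 0 < C ∧
      ∀ (p q : ℝ), 1 ≤ p → p ≤ q →
      ∀ (K' : Type) [Fintype K'] (n : ℕ)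
        (x : K' → ℝ), (∀ ℓ, 0 ≤ x ℓ ∧ x ℓ ≤ 1/5) →
      ∀ (v : Fin n → K' → ℝ), (∀ i ℓ, 0 ≤ v i ℓ) →
      ∀ (B : ℝ), 0 ≤ B →
        (∑ i, (∑ ℓ, x ℓ * v i ℓ) ^ (q/p) ≤ B ^ q) →
        (∑ i, ∑ ℓ, x ℓ * v i ℓ ^ (q/p) ≤ B ^ q) →
      ∀ (Ω : Type) [MeasurableSpace Ω] (μ : Measure Ω), IsProbabilityMeasure μ →
      ∀ (χ : K' → Ω → ℝ), (∀ ℓ, Measurable (χ ℓ)) →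
        iIndepFun χ μ →
        (∀ ℓ ω, χ ℓ ω = 0 ∨ χ ℓ ω = 1) →
        (∀ ℓ, μ {ω | χ ℓ ω = 1} = ENNReal.ofReal (5 * x ℓ)) →
        ∫ ω, (∑ i, (∑ ℓ, χ ℓ ω * v i ℓ) ^ (q/p)) ^ (1/q) ∂μ
          ≤ C * (q / Real.log (1 + q/p)) ^ (1/p) * B := by
  classical
  refine ⟨3840, by norm_num, ?_⟩
  intro p q hp hpq K' _ n x hx v hv B hB hcon1 hcon2 Ω _ μ hμ χ hmeas hind h01 hprob
  haveI := hμ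
  set α := q / p with hαdef
  have hp0 : (0:ℝ) < p := lt_of_lt_of_le one_pos hp
  have hq1 : (1:ℝ) ≤ q := hp.trans hpq
  have hq0 : (0:ℝ) < q := lt_of_lt_of_le one_pos hq1
  have hα1 : (1:ℝ) ≤ α := (one_le_div hp0).2 hpq
  have hα0 : (0:ℝ) < α := lt_of_lt_of_le one_pos hα1
  have hαq : α ≤ q := div_le_self hq0.le hp
  set L := Real.log (1 + α) with hLdef
  have hL2 : Real.log 2 ≤ L := Real.log_le_log (by norm_num) (by linarith)
  have hLh : (1/2 : ℝ) ≤ L := by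
    have := Real.log_two_gt_d9
    linarith
  have hLpos : (0:ℝ) < L := by linarith
  have hqL0 : (0:ℝ) ≤ q / L := div_nonneg hq0.le hLpos.le
  -- expectations of the Bernoullis
  have hx5 : ∀ ℓ, 0 ≤ 5 * x ℓ ∧ 5 * x ℓ ≤ 1 := fun ℓ =>
    ⟨by linarith [(hx ℓ).1], by linarith [(hx ℓ).2]⟩
  have hp5 : ∀ ℓ, ∫ ω, χ ℓ ω ∂μ = 5 * x ℓ := by
    intro ℓ
    have hset : MeasurableSet {ω | χ ℓ ω = 1} := by
      have he : {ω | χ ℓ ω = 1} = χ ℓ ⁻¹' {1} := rfl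
      rw [he]
      exact (hmeas ℓ) (measurableSet_singleton 1)
    have hpt : ∀ ω, χ ℓ ω = Set.indicator {ω' | χ ℓ ω' = 1} (fun _ => (1:ℝ)) ω := by
      intro ω
      rcases h01 ℓ ω with h | h
      · rw [h, Set.indicator_of_notMem]
        intro hmem
        rw [Set.mem_setOf_eq, h] at hmem
        norm_num at hmem
      · rw [h, Set.indicator_of_mem]
        exact h
    calc ∫ ω, χ ℓ ω ∂μ = ∫ ω, Set.indicator {ω' | χ ℓ ω' = 1} (fun _ => (1:ℝ)) ω ∂μ :=
          integral_congr_ae (Filter.Eventually.of_forall hpt)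
    _ = (μ {ω' | χ ℓ ω' = 1}).toReal • (1:ℝ) := integral_indicator_const (1:ℝ) hset
    _ = 5 * x ℓ := by
          rw [hprob ℓ, smul_eq_mul, mul_one, ENNReal.toReal_ofReal (hx5 ℓ).1]
  -- Jensen for the outer power
  have hGmeas : Measurable fun ω => ∑ i, (∑ ℓ, χ ℓ ω * v i ℓ) ^ α :=
    Finset.measurable_sum _ fun i _ =>
      (measurable_Z χ hmeas (v i)).pow measurable_const
  have hG0 : ∀ ω, 0 ≤ ∑ i, (∑ ℓ, χ ℓ ω * v i ℓ) ^ α := fun ω =>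
    Finset.sum_nonneg fun i _ => Real.rpow_nonneg (Z_nonneg h01 (hv i) ω) α
  have hGbd : ∀ ω, ∑ i, (∑ ℓ, χ ℓ ω * v i ℓ) ^ α ≤ ∑ i, (∑ ℓ, v i ℓ) ^ α := fun ω =>
    Finset.sum_le_sum fun i _ =>
      Real.rpow_le_rpow (Z_nonneg h01 (hv i) ω) (Z_le h01 (hv i) ω) hα0.le
  have hjen := jensen_rpow (μ := μ) hGmeas hG0 hGbd
    (c := 1/q) (by positivity) (by rw [div_le_one hq0]; exact hq1)
  -- the inner integral, coordinatewise
  have hIntG : ∫ ω, ∑ i, (∑ ℓ, χ ℓ ω * v i ℓ) ^ α ∂μ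
      = ∑ i, ∫ ω, (∑ ℓ, χ ℓ ω * v i ℓ) ^ α ∂μ :=
    integral_finset_sum _ fun i _ => int_Z_rpow hmeas h01 (hv i) α hα0.le
  set K0 : ℝ := (2 * (2 * (⌈α⌉₊ : ℝ) / Real.log (1 + (⌈α⌉₊ : ℝ)))) ^ (α + 1) with hK0def
  have hper : ∀ i, ∫ ω, (∑ ℓ, χ ℓ ω * v i ℓ) ^ α ∂μ ≤
      K0 * ((5 * ∑ ℓ, x ℓ * v i ℓ) ^ α + 5 * ∑ ℓ, x ℓ * v i ℓ ^ α) := by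
    intro i
    have h := per_i χ hmeas hind h01 (v i) (hv i) α hα1
    have e_m : ∑ ℓ, (∫ ω, χ ℓ ω ∂μ) * v i ℓ = 5 * ∑ ℓ, x ℓ * v i ℓ := by
      rw [Finset.mul_sum]
      exact Finset.sum_congr rfl fun ℓ _ => by rw [hp5 ℓ]; ring
    have e_s : ∑ ℓ, (∫ ω, χ ℓ ω ∂μ) * v i ℓ ^ α = 5 * ∑ ℓ, x ℓ * v i ℓ ^ α := by
      rw [Finset.mul_sum]
      exact Finset.sum_congr rfl fun ℓ _ => by rw [hp5 ℓ]; ring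
    rwa [e_m, e_s] at h
  -- numeric facts
  have hk1 : 1 ≤ ⌈α⌉₊ := Nat.one_le_ceil_iff.2 hα0
  have hkr1 : (1 : ℝ) ≤ (⌈α⌉₊ : ℝ) := by exact_mod_cast hk1
  have hkα : α ≤ (⌈α⌉₊ : ℝ) := Nat.le_ceil α
  have hkub : (⌈α⌉₊ : ℝ) < α + 1 := Nat.ceil_lt_add_one hα0.le
  have hLk : 0 < Real.log (1 + (⌈α⌉₊ : ℝ)) := Real.log_pos (by linarith)
  have hLLk : L ≤ Real.log (1 + (⌈α⌉₊ : ℝ)) :=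
    Real.log_le_log (by linarith) (by linarith)
  set R : ℝ := 2 * (⌈α⌉₊ : ℝ) / Real.log (1 + (⌈α⌉₊ : ℝ)) with hRdef
  have hR1 : 1 ≤ R := by
    rw [hRdef, le_div_iff₀ hLk]
    have := Real.log_le_sub_one_of_pos (show (0:ℝ) < 1 + (⌈α⌉₊:ℝ) by linarith)
    linarith
  have hR0 : (0:ℝ) < R := by linarith
  have h2R : 2 * R ≤ 8 * q / L := by
    have h1 : R ≤ 4 * α / L := by
      rw [hRdef]
      exact div_le_div₀ (by linarith) (by linarith) hLpos hLLk
    have h2 : 4 * α / L ≤ 4 * q / L := (div_le_div_iff_of_pos_right hLpos).2 (by linarith)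
    calc 2 * R ≤ 2 * (4 * q / L) := by linarith
    _ = 8 * q / L := by ring
  -- the key scalar inequality
  have hscalar : K0 * ((5:ℝ) ^ α + 5) ≤ 3840 ^ q * (q / L) ^ α := by
    have h5a : (5:ℝ) ≤ 5 ^ α := by
      calc (5:ℝ) = 5 ^ (1:ℝ) := (Real.rpow_one 5).symm
      _ ≤ 5 ^ α := Real.rpow_le_rpow_of_exponent_le (by norm_num) hα1
    have h5a0 : (0:ℝ) ≤ 5 ^ α := Real.rpow_nonneg (by norm_num) α
    have hK0eq : K0 = (2*R) ^ α * (2*R) := by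
      rw [hK0def, Real.rpow_add (by linarith : (0:ℝ) < 2*R), Real.rpow_one]
    have h1 : (2*R) ^ α ≤ 8 ^ α * (q/L) ^ α := by
      calc (2*R) ^ α ≤ (8*q/L) ^ α := Real.rpow_le_rpow (by linarith) h2R hα0.le
      _ = 8 ^ α * (q/L) ^ α := by
          rw [show 8*q/L = 8*(q/L) by ring, Real.mul_rpow (by norm_num) hqL0]
    have hqexp : q ≤ Real.exp q := by linarith [Real.add_one_le_exp q]
    have h3 : 2*R ≤ 16 * Real.exp q := by
      have : 2 * R ≤ 16 * q := by
        refine h2R.trans ?_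
        rw [div_le_iff₀ hLpos]
        nlinarith
      have := Real.exp_pos q
      nlinarith
    have h8a0 : (0:ℝ) ≤ 8 ^ α := Real.rpow_nonneg (by norm_num) α
    have hql0 : (0:ℝ) ≤ (q/L) ^ α := Real.rpow_nonneg hqL0 α
    have hK0bd : K0 ≤ (8 ^ α * (q/L) ^ α) * (16 * Real.exp q) := by
      rw [hK0eq]
      refine mul_le_mul h1 h3 (by linarith) ?_
      exact mul_nonneg h8a0 hql0
    have hK00 : (0:ℝ) ≤ K0 := by
      rw [hK0eq]
      exact mul_nonneg (Real.rpow_nonneg (by linarith) α) (by linarith)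
    calc K0 * ((5:ℝ) ^ α + 5) ≤ K0 * (2 * 5 ^ α) :=
          mul_le_mul_of_nonneg_left (by linarith) hK00
    _ ≤ ((8 ^ α * (q/L) ^ α) * (16 * Real.exp q)) * (2 * 5 ^ α) := by
          refine mul_le_mul_of_nonneg_right hK0bd (by linarith)
    _ = (32 * (8 ^ α * 5 ^ α) * Real.exp q) * (q/L) ^ α := by ring
    _ = (32 * 40 ^ α * Real.exp q) * (q/L) ^ α := by
          rw [← Real.mul_rpow (by norm_num : (0:ℝ) ≤ 8) (by norm_num : (0:ℝ) ≤ 5)]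
          norm_num
    _ ≤ 3840 ^ q * (q / L) ^ α := by
          refine mul_le_mul_of_nonneg_right ?_ hql0
          have h40 : (40:ℝ) ^ α ≤ 40 ^ q := Real.rpow_le_rpow_of_exponent_le (by norm_num) hαq
          have h32 : (32:ℝ) ≤ 32 ^ q := by
            calc (32:ℝ) = 32 ^ (1:ℝ) := (Real.rpow_one _).symm
            _ ≤ 32 ^ q := Real.rpow_le_rpow_of_exponent_le (by norm_num) hq1
          have hexp1 : Real.exp q = Real.exp 1 ^ q := (Real.exp_one_rpow q).symm
          have h400 : (0:ℝ) ≤ 40 ^ α := Real.rpow_nonneg (by norm_num) α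
          have h40q0 : (0:ℝ) ≤ 40 ^ q := Real.rpow_nonneg (by norm_num) q
          have h32q0 : (0:ℝ) ≤ 32 ^ q := Real.rpow_nonneg (by norm_num) q
          have hcomb : 32 * (40:ℝ) ^ α * Real.exp q ≤ 32 ^ q * 40 ^ q * Real.exp 1 ^ q := by
            rw [hexp1]
            refine mul_le_mul (mul_le_mul h32 h40 h400 h32q0) le_rfl ?_ ?_
            · positivity
            · exact mul_nonneg h32q0 h40q0
          refine hcomb.trans ?_
          have he : (32:ℝ) ^ q * 40 ^ q * Real.exp 1 ^ q = (32 * 40 * Real.exp 1) ^ q := by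
            rw [Real.mul_rpow (by positivity) (Real.exp_pos 1).le,
              Real.mul_rpow (by norm_num) (by norm_num)]
          rw [he]
          refine Real.rpow_le_rpow (by positivity) ?_ hq0.le
          have := Real.exp_one_lt_d9
          nlinarith
  -- put everything together
  have hB0 : (0:ℝ) ≤ B ^ q := Real.rpow_nonneg hB q
  have hK00 : (0:ℝ) ≤ K0 := Real.rpow_nonneg (by positivity) _
  have hbig : ∫ ω, ∑ i, (∑ ℓ, χ ℓ ω * v i ℓ) ^ α ∂μ
      ≤ (3840 * (q / L) ^ (1/p) * B) ^ q := by
    have hsum1 : ∑ i, ∫ ω, (∑ ℓ, χ ℓ ω * v i ℓ) ^ α ∂μ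
        ≤ K0 * ((5:ℝ) ^ α * B ^ q + 5 * B ^ q) := by
      calc ∑ i, ∫ ω, (∑ ℓ, χ ℓ ω * v i ℓ) ^ α ∂μ
          ≤ ∑ i, K0 * ((5 * ∑ ℓ, x ℓ * v i ℓ) ^ α + 5 * ∑ ℓ, x ℓ * v i ℓ ^ α) :=
            Finset.sum_le_sum fun i _ => hper i
      _ = K0 * ((∑ i, (5 * ∑ ℓ, x ℓ * v i ℓ) ^ α) + 5 * ∑ i, ∑ ℓ, x ℓ * v i ℓ ^ α) := by
            rw [← Finset.mul_sum, Finset.sum_add_distrib, ← Finset.mul_sum]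
      _ ≤ K0 * ((5:ℝ) ^ α * B ^ q + 5 * B ^ q) := by
            refine mul_le_mul_of_nonneg_left ?_ hK00
            have hA : ∑ i, (5 * ∑ ℓ, x ℓ * v i ℓ) ^ α ≤ (5:ℝ) ^ α * B ^ q := by
              have he : ∀ i : Fin n, (5 * ∑ ℓ, x ℓ * v i ℓ) ^ α
                  = (5:ℝ) ^ α * (∑ ℓ, x ℓ * v i ℓ) ^ α := fun i =>
                Real.mul_rpow (by norm_num)
                  (Finset.sum_nonneg fun ℓ _ => mul_nonneg (hx ℓ).1 (hv i ℓ))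
              calc ∑ i, (5 * ∑ ℓ, x ℓ * v i ℓ) ^ α
                  = (5:ℝ) ^ α * ∑ i, (∑ ℓ, x ℓ * v i ℓ) ^ α := by
                    rw [Finset.mul_sum]
                    exact Finset.sum_congr rfl fun i _ => he i
              _ ≤ (5:ℝ) ^ α * B ^ q :=
                    mul_le_mul_of_nonneg_left hcon1 (Real.rpow_nonneg (by norm_num) α)
            have hS : 5 * ∑ i, ∑ ℓ, x ℓ * v i ℓ ^ α ≤ 5 * B ^ q := by linarith [hcon2]
            linarith
    have hexpand : (3840 * (q / L) ^ (1/p) * B) ^ q = 3840 ^ q * (q/L) ^ α * B ^ q := by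
      rw [Real.mul_rpow (mul_nonneg (by norm_num) (Real.rpow_nonneg hqL0 _)) hB,
        Real.mul_rpow (by norm_num) (Real.rpow_nonneg hqL0 _),
        ← Real.rpow_mul hqL0,
        show 1/p * q = α by rw [hαdef]; ring]
    rw [hIntG, hexpand]
    calc ∑ i, ∫ ω, (∑ ℓ, χ ℓ ω * v i ℓ) ^ α ∂μ
        ≤ K0 * ((5:ℝ) ^ α * B ^ q + 5 * B ^ q) := hsum1
    _ = (K0 * ((5:ℝ) ^ α + 5)) * B ^ q := by ring
    _ ≤ (3840 ^ q * (q/L) ^ α) * B ^ q := mul_le_mul_of_nonneg_right hscalar hB0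
  have hRHS0 : (0:ℝ) ≤ 3840 * (q / L) ^ (1/p) * B :=
    mul_nonneg (mul_nonneg (by norm_num) (Real.rpow_nonneg hqL0 _)) hB
  calc ∫ ω, (∑ i, (∑ ℓ, χ ℓ ω * v i ℓ) ^ α) ^ (1/q) ∂μ
      ≤ (∫ ω, ∑ i, (∑ ℓ, χ ℓ ω * v i ℓ) ^ α ∂μ) ^ (1/q) := hjen
  _ ≤ ((3840 * (q / L) ^ (1/p) * B) ^ q) ^ (1/q) :=
      Real.rpow_le_rpow (integral_nonneg hG0) hbig (by positivity)
  _ = 3840 * (q / L) ^ (1/p) * B := by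
      rw [← Real.rpow_mul hRHS0, mul_one_div_cancel hq0.ne', Real.rpow_one]
end

section
/- Let 1 ≤ q ≤ p < ∞, let S_1, …, S_m be subsets of [n], let J ⊆ [m] with J ≠ [m], and let I ⊆ [n] be nonempty with S_j ⊆ I for every j ∈ J. Consider the (p,q)-Fair Clustering instance on the uniform metric space ([m], d) with d(j, j') = 1 for j ≠ j' and weight functions w_i(j) = 1 if i ∈ S_j and 0 otherwise. Then the set of centers K = [m] ∖ J satisfies cost_{p,q}(K) ≤ |I|^{(p−q)/(pq)}·(Σ_{j∈J} |S_j|)^{1/p}. -/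
/-- Dense-case upper bound in the reduction from Min s-Union. On the uniform
metric space on `[m]` with weights `w_i(j) = 1_{i ∈ S_j}`, if `J ≠ [m]`, `I ≠ ∅` and
`S_j ⊆ I` for all `j ∈ J`, then the centers `K = [m] ∖ J` satisfy
`cost_{p,q}(K) ≤ |I|^{(p−q)/(pq)}·(∑_{j∈J}|S_j|)^{1/p}` (for `1 ≤ q ≤ p < ∞`). -/
theorem min_s_union_dense_upper_bound
    (m n : ℕ) [MetricSpace (Fin m)]
    (huniform : ∀ j j' : Fin m, j ≠ j' → dist j j' = 1)
    (p q : ℝ) (hq : 1 ≤ q) (hqp : q ≤ p)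
    (S : Fin m → Finset (Fin n))
    (J : Finset (Fin m)) (hJ : J ≠ Finset.univ)
    (I : Finset (Fin n)) (hI : I.Nonempty)
    (hSI : ∀ j ∈ J, S j ⊆ I) :
    (∑ i, (∑ j, (if i ∈ S j then (1:ℝ) else 0) *
          Metric.infDist j (↑(Jᶜ) : Set (Fin m)) ^ p) ^ (q/p)) ^ (1/q)
      ≤ (I.card : ℝ) ^ ((p - q)/(p*q)) * ((∑ j ∈ J, ((S j).card : ℝ)) ^ (1/p)) := by
  have hq0 : (0:ℝ) < q := lt_of_lt_of_le one_pos hq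
  have hp0 : (0:ℝ) < p := lt_of_lt_of_le one_pos (hq.trans hqp)
  have hcompl' : ((Jᶜ : Finset (Fin m)) : Set (Fin m)).Nonempty := by
    obtain ⟨j0, hj0⟩ : ∃ j, j ∉ J := by
      by_contra h; push_neg at h; exact hJ (Finset.eq_univ_iff_forall.mpr h)
    exact ⟨j0, by simpa using hj0⟩
  -- infDist is the indicator of J
  have hdist : ∀ j : Fin m, Metric.infDist j (↑(Jᶜ) : Set (Fin m))
      = if j ∈ J then 1 else 0 := by
    intro j
    by_cases hj : j ∈ J
    · rw [if_pos hj]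
      obtain ⟨j0, hj0⟩ := id hcompl'
      have hj0' : j0 ∉ J := by simpa using hj0
      have hne : j ≠ j0 := fun h => hj0' (h ▸ hj)
      have hle : Metric.infDist j (↑(Jᶜ) : Set (Fin m)) ≤ 1 := by
        have := Metric.infDist_le_dist_of_mem (x := j) hj0
        rwa [huniform j j0 hne] at this
      have hge : (1:ℝ) ≤ Metric.infDist j (↑(Jᶜ) : Set (Fin m)) := by
        by_contra h
        push_neg at h
        obtain ⟨y, hy, hylt⟩ := (Metric.infDist_lt_iff hcompl').mp h
        have hyJ : y ∉ J := by simpa using hy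
        have hne' : j ≠ y := fun h' => hyJ (h' ▸ hj)
        rw [huniform j y hne'] at hylt
        exact lt_irrefl _ hylt
      linarith
    · rw [if_neg hj]
      exact Metric.infDist_zero_of_mem (by simpa using hj)
  -- inner sums
  set a : Fin n → ℝ := fun i => ∑ j ∈ J, (if i ∈ S j then (1:ℝ) else 0) with ha
  have ha_nonneg : ∀ i, 0 ≤ a i := fun i =>
    Finset.sum_nonneg fun j _ => by positivity
  have hinner : ∀ i : Fin n, (∑ j, (if i ∈ S j then (1:ℝ) else 0) *
      Metric.infDist j (↑(Jᶜ) : Set (Fin m)) ^ p) = a i := by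
    intro i
    rw [ha]
    rw [← Finset.sum_subset (Finset.subset_univ J) (fun j _ hj => by
      rw [hdist j, if_neg hj, Real.zero_rpow (ne_of_gt hp0), mul_zero])]
    exact Finset.sum_congr rfl fun j hj => by
      rw [hdist j, if_pos hj, Real.one_rpow, mul_one]
  -- a vanishes off I
  have haI : ∀ i ∉ I, a i = 0 := by
    intro i hi
    apply Finset.sum_eq_zero
    intro j hj
    rw [if_neg (fun hmem => hi (hSI j hj hmem))]
  -- restrict outer sum to I
  have houter : (∑ i, (a i) ^ (q/p)) = ∑ i ∈ I, (a i) ^ (q/p) := by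
    rw [← Finset.sum_subset (Finset.subset_univ I) (fun i _ hi => by
      rw [haI i hi, Real.zero_rpow (by positivity)])]
  -- total mass
  set A : ℝ := ∑ i ∈ I, a i with hA
  have hA_nonneg : 0 ≤ A := Finset.sum_nonneg fun i _ => ha_nonneg i
  have hAval : A = ∑ j ∈ J, ((S j).card : ℝ) := by
    rw [hA, Finset.sum_subset (Finset.subset_univ I) (fun i _ hi => haI i hi), ha]
    rw [Finset.sum_comm]
    refine Finset.sum_congr rfl fun j _ => ?_
    rw [Finset.sum_boole]
    congr 1
    simp [Finset.filter_mem_eq_inter]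
  -- Hölder step
  set B : ℝ := ∑ i ∈ I, (a i) ^ (q/p) with hB
  have hB_nonneg : 0 ≤ B := Finset.sum_nonneg fun i _ => Real.rpow_nonneg (ha_nonneg i) _
  have hpq1 : (1:ℝ) ≤ p / q := (one_le_div hq0).mpr hqp
  have hqppq : q / p * (p / q) = 1 := by field_simp
  have key : B ^ (p/q) ≤ (I.card : ℝ) ^ (p/q - 1) * A := by
    have h1 := Real.rpow_sum_le_const_mul_sum_rpow_of_nonneg (s := I)
      (f := fun i => (a i) ^ (q/p)) hpq1
      (fun i _ => Real.rpow_nonneg (ha_nonneg i) _)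
    calc B ^ (p/q) ≤ (I.card : ℝ) ^ (p/q - 1) * ∑ i ∈ I, ((a i) ^ (q/p)) ^ (p/q) := h1
      _ = (I.card : ℝ) ^ (p/q - 1) * A := by
          congr 1
          refine Finset.sum_congr rfl fun i _ => ?_
          rw [← Real.rpow_mul (ha_nonneg i), hqppq, Real.rpow_one]
  have hBY : B ≤ ((I.card : ℝ) ^ (p/q - 1) * A) ^ (q/p) := by
    have : B = (B ^ (p/q)) ^ (q/p) := by
      rw [← Real.rpow_mul hB_nonneg, show p / q * (q / p) = 1 by field_simp, Real.rpow_one]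
    rw [this]
    exact Real.rpow_le_rpow (Real.rpow_nonneg hB_nonneg _) key (by positivity)
  -- finish
  have hfinal : B ^ (1/q) ≤ (I.card : ℝ) ^ ((p - q)/(p*q)) * A ^ (1/p) := by
    calc B ^ (1/q) ≤ (((I.card : ℝ) ^ (p/q - 1) * A) ^ (q/p)) ^ (1/q) :=
          Real.rpow_le_rpow hB_nonneg hBY (by positivity)
      _ = ((I.card : ℝ) ^ (p/q - 1) * A) ^ (1/p) := by
          rw [← Real.rpow_mul (by positivity), show q / p * (1 / q) = 1 / p by
            field_simp]
      _ = ((I.card : ℝ) ^ (p/q - 1)) ^ (1/p) * A ^ (1/p) := by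
          rw [Real.mul_rpow (by positivity) hA_nonneg]
      _ = (I.card : ℝ) ^ ((p - q)/(p*q)) * A ^ (1/p) := by
          rw [← Real.rpow_mul (by positivity), show (p / q - 1) * (1 / p) = (p - q) / (p * q) by
            rw [div_sub_one (ne_of_gt hq0), div_mul_div_comm, mul_one, mul_comm q p]]
  calc (∑ i, (∑ j, (if i ∈ S j then (1:ℝ) else 0) *
          Metric.infDist j (↑(Jᶜ) : Set (Fin m)) ^ p) ^ (q/p)) ^ (1/q)
      = (∑ i, (a i) ^ (q/p)) ^ (1/q) := by
        congr 1
        exact Finset.sum_congr rfl fun i _ => by rw [hinner i]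
    _ = B ^ (1/q) := by rw [houter]
    _ ≤ (I.card : ℝ) ^ ((p - q)/(p*q)) * A ^ (1/p) := hfinal
    _ = (I.card : ℝ) ^ ((p - q)/(p*q)) * ((∑ j ∈ J, ((S j).card : ℝ)) ^ (1/p)) := by
        rw [hAval]
end

section
/- Let p, q ∈ [1, ∞) and let S_1, …, S_m be subsets of [n]. Consider the (p,q)-Fair Clustering instance on the uniform metric space ([m], d) with d(j, j') = 1 for j ≠ j' and weight functions w_i(j) = 1 if i ∈ S_j and 0 otherwise. Then every nonempty set of centers K ⊆ [m] satisfies cost_{p,q}(K) ≥ |⋃_{j ∈ [m]∖K} S_j|^{1/q}. -/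
/-- Deterministic lower bound in the reduction from Min s-Union. On the
uniform metric space on `[m]` with weights `w_i(j) = 1_{i ∈ S_j}`, every nonempty set of
centers `K` satisfies `cost_{p,q}(K) ≥ |⋃_{j ∉ K} S_j|^{1/q}`. -/
theorem min_s_union_random_lower_bound
    (m n : ℕ) [MetricSpace (Fin m)]
    (huniform : ∀ j j' : Fin m, j ≠ j' → dist j j' = 1)
    (p q : ℝ) (hp : 1 ≤ p) (hq : 1 ≤ q)
    (S : Fin m → Finset (Fin n))
    (K : Finset (Fin m)) (hK : K.Nonempty) :
    (((Kᶜ).biUnion S).card : ℝ) ^ (1/q)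
      ≤ (∑ i, (∑ j, (if i ∈ S j then (1:ℝ) else 0) *
          Metric.infDist j (↑K : Set (Fin m)) ^ p) ^ (q/p)) ^ (1/q) := by
  have hp0 : (0:ℝ) ≤ p := le_trans zero_le_one hp
  have hq0 : (0:ℝ) ≤ q := le_trans zero_le_one hq
  have hKne : (↑K : Set (Fin m)).Nonempty := by exact_mod_cast hK
  -- each term is nonneg
  have hterm : ∀ (i : Fin n) (j : Fin m),
      0 ≤ (if i ∈ S j then (1:ℝ) else 0) * Metric.infDist j (↑K : Set (Fin m)) ^ p := by
    intro i j
    apply mul_nonneg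
    · positivity
    · exact Real.rpow_nonneg Metric.infDist_nonneg _
  -- inner sum ≥ 1 for i in the union
  have hinner : ∀ i ∈ (Kᶜ).biUnion S,
      (1:ℝ) ≤ ∑ j, (if i ∈ S j then (1:ℝ) else 0) *
        Metric.infDist j (↑K : Set (Fin m)) ^ p := by
    intro i hi
    obtain ⟨j, hj, hij⟩ := Finset.mem_biUnion.mp hi
    have hjK : j ∉ K := Finset.mem_compl.mp hj
    have hd : (1:ℝ) ≤ Metric.infDist j (↑K : Set (Fin m)) := by
      by_contra h
      obtain ⟨y, hy, hlt⟩ := (Metric.infDist_lt_iff hKne).mp (lt_of_not_ge h)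
      have hne : j ≠ y := by rintro rfl; exact hjK hy
      rw [huniform j y hne] at hlt
      exact lt_irrefl _ hlt
    have h1 : (1:ℝ) ≤ (if i ∈ S j then (1:ℝ) else 0) *
        Metric.infDist j (↑K : Set (Fin m)) ^ p := by
      rw [if_pos hij, one_mul]
      exact Real.one_le_rpow hd hp0
    calc (1:ℝ) ≤ _ := h1
      _ ≤ _ := Finset.single_le_sum (fun j _ => hterm i j) (Finset.mem_univ j)
  -- outer sum ≥ card
  have houter : (((Kᶜ).biUnion S).card : ℝ)
      ≤ ∑ i, (∑ j, (if i ∈ S j then (1:ℝ) else 0) *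
          Metric.infDist j (↑K : Set (Fin m)) ^ p) ^ (q/p) := by
    have h1 : (((Kᶜ).biUnion S).card : ℝ)
        = ∑ i ∈ (Kᶜ).biUnion S, (1:ℝ) := by simp
    rw [h1]
    calc ∑ i ∈ (Kᶜ).biUnion S, (1:ℝ)
        ≤ ∑ i ∈ (Kᶜ).biUnion S, (∑ j, (if i ∈ S j then (1:ℝ) else 0) *
            Metric.infDist j (↑K : Set (Fin m)) ^ p) ^ (q/p) :=
          Finset.sum_le_sum fun i hi =>
            Real.one_le_rpow (hinner i hi) (div_nonneg hq0 hp0)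
      _ ≤ _ := Finset.sum_le_sum_of_subset_of_nonneg (Finset.subset_univ _)
          (fun i _ _ => Real.rpow_nonneg (Finset.sum_nonneg fun j _ => hterm i j) _)
  exact Real.rpow_le_rpow (by positivity) houter (by positivity)
end

section
/- Let ([m], d) be a finite metric space, w_1, …, w_n : [m] → ℝ≥0 nonnegative weight functions, and p, q ∈ [1, ∞). Let K ⊆ [m] with |K| ≥ 2, let {V_ℓ}_{ℓ∈K} be a Voronoi partition of [m] induced by K, and for each ℓ ∈ K let σ(ℓ) be a closest point of K ∖ {ℓ} to ℓ. Let Λ ⊆ K be a set such that σ(ℓ) ∉ Λ for every ℓ ∈ Λ and V_ℓ ⊊ [m] for every ℓ ∈ Λ. Then for every group i ∈ [n]: Σ_{j=1}^m w_i(j)·d(j, K∖Λ)^p ≤ Σ_{j=1}^m w_i(j)·(3·d(j, K) + 2·1[j ∈ ⋃_{ℓ∈Λ} V_ℓ]·d(j, [m]∖V_{ℓ(j)}))^p, where ℓ(j) denotes the index with j ∈ V_{ℓ(j)}. -/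
/-- Per-group pointwise bound in the proof of item 5 of the reduction.
For a Voronoi partition `{V_ℓ}` induced by `K` (`|K| ≥ 2`), nearest-neighbor map `σ`,
and `Λ ⊆ K` with `σ(ℓ) ∉ Λ` and `V_ℓ ⊊ [m]` for all `ℓ ∈ Λ`, for every group `i`:
`∑_j w_i(j)·d(j, K∖Λ)^p ≤ ∑_j w_i(j)·(3·d(j,K) + 2·1[ℓ(j) ∈ Λ]·d(j, [m]∖V_{ℓ(j)}))^p`,
where `ℓ(j)` is the index of the Voronoi cell containing `j` (the right-hand side is
written as a sum over the cells of the partition). -/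
theorem charikar_reduction_item5_pointwise
    (m n : ℕ) [MetricSpace (Fin m)]
    (w : Fin n → Fin m → ℝ) (hw : ∀ i j, 0 ≤ w i j)
    (p q : ℝ) (hp : 1 ≤ p) (hq : 1 ≤ q)
    (K : Finset (Fin m)) (hK : 2 ≤ K.card)
    (V : Fin m → Finset (Fin m)) (σ : Fin m → Fin m)
    (hmem : ∀ c ∈ K, c ∈ V c)
    (hdisj : ∀ c ∈ K, ∀ c' ∈ K, c ≠ c' → Disjoint (V c) (V c'))
    (hcover : ∀ j : Fin m, ∃ c ∈ K, j ∈ V c)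
    (hvor : ∀ c ∈ K, ∀ j ∈ V c, dist j c = Metric.infDist j (↑K : Set (Fin m)))
    (hσ : ∀ c ∈ K, σ c ∈ K ∧ σ c ≠ c ∧
        dist c (σ c) = Metric.infDist c ((↑K : Set (Fin m)) \ {c}))
    (Λ : Finset (Fin m)) (hΛK : Λ ⊆ K)
    (hσΛ : ∀ c ∈ Λ, σ c ∉ Λ)
    (hproper : ∀ c ∈ Λ, V c ≠ Finset.univ) :
    ∀ i : Fin n,
      ∑ j, w i j * Metric.infDist j (↑(K \ Λ) : Set (Fin m)) ^ p
        ≤ ∑ ℓ ∈ K, ∑ j ∈ V ℓ, w i j *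
            (3 * Metric.infDist j (↑K : Set (Fin m))
              + 2 * (if ℓ ∈ Λ then (1:ℝ) else 0) *
                  Metric.infDist j (↑((V ℓ)ᶜ) : Set (Fin m))) ^ p := by
  
  intro i
  have huniv : (Finset.univ : Finset (Fin m)) = K.biUnion V := by
    ext j
    simp only [Finset.mem_univ, Finset.mem_biUnion, true_iff]
    exact hcover j
  have hpd : (↑K : Set (Fin m)).PairwiseDisjoint V := by
    intro a ha b hb hab
    exact hdisj a ha b hb hab
  rw [huniv, Finset.sum_biUnion hpd]
  refine Finset.sum_le_sum fun ℓ hℓ => Finset.sum_le_sum fun j hj => ?_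
  have hdj : dist j ℓ = Metric.infDist j (↑K : Set (Fin m)) := hvor ℓ hℓ j hj
  have hA0 : 0 ≤ Metric.infDist j (↑(K \ Λ) : Set (Fin m)) := Metric.infDist_nonneg
  refine mul_le_mul_of_nonneg_left ?_ (hw i j)
  refine Real.rpow_le_rpow hA0 ?_ (by linarith)
  by_cases hcase : ℓ ∈ Λ
  · -- σ ℓ ∈ K \ Λ
    obtain ⟨hσK, hσne, hσd⟩ := hσ ℓ hℓ
    have hσmem : σ ℓ ∈ (↑(K \ Λ) : Set (Fin m)) := by
      simp [Finset.mem_sdiff, hσK, hσΛ ℓ hcase]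
    -- closest point of (V ℓ)ᶜ to j
    have hne : ((V ℓ)ᶜ : Finset (Fin m)).Nonempty := by
      rw [Finset.nonempty_iff_ne_empty]
      intro h
      exact hproper ℓ hcase (by simpa [Finset.compl_eq_empty_iff] using h)
    obtain ⟨x, hxmem, hxmin⟩ := ((V ℓ)ᶜ : Finset (Fin m)).exists_min_image (fun y => dist j y) hne
    have hxd : Metric.infDist j (↑((V ℓ)ᶜ) : Set (Fin m)) = dist j x := by
      refine le_antisymm (Metric.infDist_le_dist_of_mem (by simpa using hxmem)) ?_
      rw [Metric.infDist_eq_iInf]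
      have : Nonempty (↑((V ℓ)ᶜ) : Set (Fin m)) := by
        obtain ⟨y, hy⟩ := hne
        exact ⟨⟨y, by simpa using hy⟩⟩
      exact le_ciInf fun y => hxmin y (by simpa using y.2)
    have hxV : x ∉ V ℓ := by simpa using hxmem
    obtain ⟨ℓ', hℓ'K, hxℓ'⟩ := hcover x
    have hℓ'ne : ℓ' ≠ ℓ := fun h => hxV (h ▸ hxℓ')
    have h1 : Metric.infDist j (↑(K \ Λ) : Set (Fin m)) ≤ dist j (σ ℓ) :=
      Metric.infDist_le_dist_of_mem hσmem
    have h2 : dist j (σ ℓ) ≤ dist j ℓ + dist ℓ (σ ℓ) := dist_triangle j ℓ (σ ℓ)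
    have h3 : dist ℓ (σ ℓ) ≤ dist ℓ ℓ' := by
      rw [hσd]
      exact Metric.infDist_le_dist_of_mem (by simp [hℓ'K, hℓ'ne])
    have h4 : dist ℓ ℓ' ≤ dist ℓ x + dist x ℓ' := dist_triangle ℓ x ℓ'
    have h5 : dist x ℓ' ≤ dist x ℓ := by
      rw [hvor ℓ' hℓ'K x hxℓ']
      exact Metric.infDist_le_dist_of_mem (by simpa using hℓ)
    have h6 : dist ℓ x ≤ dist ℓ j + dist j x := dist_triangle ℓ j x
    have hsym1 : dist ℓ j = dist j ℓ := dist_comm ℓ j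
    have hsym2 : dist x ℓ = dist ℓ x := dist_comm x ℓ
    simp only [hcase, if_true]
    rw [← hdj, hxd]
    linarith
  · have hmem' : ℓ ∈ (↑(K \ Λ) : Set (Fin m)) := by
      simp [Finset.mem_sdiff, hℓ, hcase]
    have h1 : Metric.infDist j (↑(K \ Λ) : Set (Fin m)) ≤ dist j ℓ :=
      Metric.infDist_le_dist_of_mem hmem'
    have h2 : 0 ≤ Metric.infDist j (↑K : Set (Fin m)) := Metric.infDist_nonneg
    simp only [hcase, if_false]
    linarith [h1, hdj.le]
end
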